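/- arXiv:1104.4605 — 11 statements merged into one kernel-verified Lean document; each statement's English description precedes it below -/
import Mathlib

section
/- Let 2 ≤ j < k and n > k+j+1, and let A = R^{j,k} be the normalized Radon matrix. If s ≥ C(k+j+1, k), then there is no constant δ_s < 1 such that the inequalities (1−δ_s)‖x‖₂² ≤ ‖A_T x‖₂² ≤ (1+δ_s)‖x‖₂² hold for every set T of column indices with |T| ≤ s and every vector x ∈ ℝ^{|T|}; equivalently, for every δ_s < 1 there exist a set T of k-element subsets with |T| ≤ s and a nonzero x ∈ ℝ^{|T|} violating the lower inequality. -/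
open scoped Classical
open Finset Matrix

noncomputable section

/-- The normalized Radon matrix `R^{j,k}`: rows are indexed by `j`-element subsets of
`{1,…,n}`, columns by `k`-element subsets, with entry `1/√(C(k,j))` if the row set is
contained in the column set and `0` otherwise. -/
def radon (n j k : ℕ) :
    Matrix {σ : Finset (Fin n) // σ.card = j} {τ : Finset (Fin n) // τ.card = k} ℝ :=
  fun σ τ => if σ.1 ⊆ τ.1 then 1 / Real.sqrt (k.choose j) else 0

/-- The submatrix of `A` consisting of the columns indexed by `T`. -/
def colSub {m p R : Type*} (A : Matrix m p R) (T : Finset p) :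
    Matrix m {x // x ∈ T} R :=
  fun i t => A i t.1

/-- Maximum absolute row sum of a matrix, `‖M‖_∞`. -/
def matInfNorm {m p : Type*} [Fintype p] (M : Matrix m p ℝ) : ℝ :=
  ⨆ i, ∑ j, |M i j|

/-- Maximum absolute column sum of a matrix, `‖M‖₁`. -/
def matOneNorm {m p : Type*} [Fintype m] (M : Matrix m p ℝ) : ℝ :=
  ⨆ j, ∑ i, |M i j|

/-- `ℓ¹` norm of a vector. -/
def vecOneNorm {m : Type*} [Fintype m] (u : m → ℝ) : ℝ := ∑ i, |u i|

/-- `ℓ^∞` norm of a vector. -/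
def vecInfNorm {m : Type*} (u : m → ℝ) : ℝ := ⨆ i, |u i|

lemma card_filter_subset (n c : ℕ) (S : Finset (Fin n)) :
    (Finset.univ.filter fun τ : {τ : Finset (Fin n) // τ.card = c} => τ.1 ⊆ S).card
      = S.card.choose c := by
  rw [← Finset.card_powersetCard]
  apply Finset.card_bij (fun τ _ => τ.1)
  · intro a ha
    rw [Finset.mem_powersetCard]
    exact ⟨(Finset.mem_filter.mp ha).2, a.2⟩
  · intro a _ b _ h
    exact Subtype.ext h
  · intro u hu
    rw [Finset.mem_powersetCard] at hu
    exact ⟨⟨u, hu.2⟩, by simp [hu.1], rfl⟩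

lemma choose_strict (j k : ℕ) (hjk : j < k) :
    (k + j + 1).choose j < (k + j + 1).choose k := by
  have h1 : (k + j + 1).choose k = (k + j + 1).choose (j + 1) := by
    have := Nat.choose_symm (show k ≤ k + j + 1 by omega)
    have h' : k + j + 1 - k = j + 1 := by omega
    rw [h'] at this
    exact this.symm
  rw [h1]
  have h2 : (k + j + 1).choose (j + 1) * (j + 1) = (k + j + 1).choose j * (k + j + 1 - j) :=
    Nat.choose_succ_right_eq _ _
  have h3 : k + j + 1 - j = k + 1 := by omega
  rw [h3] at h2
  have hpos : 0 < (k + j + 1).choose j := Nat.choose_pos (by omega)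
  nlinarith

/-- failure of universal recovery (RIP) for the Radon matrix.
If `2 ≤ j < k`, `n > k+j+1` and `s ≥ C(k+j+1,k)`, then for every `δ < 1` there exist a set
`T` of at most `s` columns and a nonzero `x` violating the lower RIP inequality. -/
theorem stmt0 (n j k s : ℕ) (hj : 2 ≤ j) (hjk : j < k) (hn : k + j + 1 < n)
    (hs : (k + j + 1).choose k ≤ s) (δ : ℝ) (hδ : δ < 1) :
    ∃ T : Finset {τ : Finset (Fin n) // τ.card = k}, T.card ≤ s ∧
      ∃ x : {τ // τ ∈ T} → ℝ, x ≠ 0 ∧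
        ∑ σ : {σ : Finset (Fin n) // σ.card = j},
            ((colSub (radon n j k) T).mulVec x σ) ^ 2 <
          (1 - δ) * ∑ t, (x t) ^ 2 := by
  obtain ⟨S, -, hS⟩ := Finset.exists_subset_card_eq
    (show k + j + 1 ≤ (Finset.univ : Finset (Fin n)).card by
      simp [Finset.card_univ]; omega)
  set T : Finset {τ : Finset (Fin n) // τ.card = k} :=
    Finset.univ.filter (fun τ => τ.1 ⊆ S) with hT
  set R : Finset {σ : Finset (Fin n) // σ.card = j} :=
    Finset.univ.filter (fun σ => σ.1 ⊆ S) with hR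
  have hTcard : T.card = (k + j + 1).choose k := by
    rw [hT, card_filter_subset, hS]
  have hRcard : R.card = (k + j + 1).choose j := by
    rw [hR, card_filter_subset, hS]
  set M : Matrix {σ // σ ∈ R} {τ // τ ∈ T} ℝ :=
    fun σ τ => radon n j k σ.1 τ.1 with hM
  have hker : ∃ x : {τ // τ ∈ T} → ℝ, x ≠ 0 ∧ M.mulVec x = 0 := by
    by_contra hcon
    push_neg at hcon
    have hinj : Function.Injective M.mulVecLin := by
      rw [← LinearMap.ker_eq_bot, LinearMap.ker_eq_bot']
      intro x hx
      by_contra hx0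
      exact hcon x hx0 hx
    have hle := LinearMap.finrank_le_finrank_of_injective hinj
    rw [Module.finrank_fintype_fun_eq_card, Module.finrank_fintype_fun_eq_card,
      Fintype.card_coe, Fintype.card_coe, hTcard, hRcard] at hle
    exact absurd hle (Nat.not_le.mpr (choose_strict j k hjk))
  obtain ⟨x, hx0, hxker⟩ := hker
  refine ⟨T, by rw [hTcard]; exact hs, x, hx0, ?_⟩
  have hzero : ∀ σ : {σ : Finset (Fin n) // σ.card = j},
      (colSub (radon n j k) T).mulVec x σ = 0 := by
    intro σ
    by_cases hσS : σ.1 ⊆ S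
    · have hmem : σ ∈ R := by simp [hR, hσS]
      have := congrFun hxker ⟨σ, hmem⟩
      simpa [Matrix.mulVec, dotProduct, hM, colSub] using this
    · unfold Matrix.mulVec dotProduct colSub radon
      apply Finset.sum_eq_zero
      intro t _
      have htS : t.1.1 ⊆ S := (Finset.mem_filter.mp t.2).2
      have hns : ¬ σ.1 ⊆ t.1.1 := fun h => hσS (h.trans htS)
      simp [hns]
  have hL : ∑ σ : {σ : Finset (Fin n) // σ.card = j},
      ((colSub (radon n j k) T).mulVec x σ) ^ 2 = 0 := by
    apply Finset.sum_eq_zero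
    intro σ _
    rw [hzero σ]; ring
  rw [hL]
  have hpos : 0 < ∑ t, (x t) ^ 2 := by
    obtain ⟨t, ht⟩ := Function.ne_iff.mp hx0
    apply Finset.sum_pos' (fun i _ => sq_nonneg _)
    exact ⟨t, Finset.mem_univ t, by simpa [sq_abs] using pow_pos (abs_pos.mpr ht) 2⟩
  have h1δ : 0 < 1 - δ := by linarith
  exact mul_pos h1δ hpos
end
end

section
/- Let 2 ≤ j < k and n ≥ k+j+1, and let A = R^{j,k} be the normalized Radon matrix. Let T = {τ : τ ⊆ {1,…,k+j+1}, |τ| = k} be the set of all k-element subsets of {1,…,k+j+1}. Then the columns of A indexed by T are linearly dependent; that is, there exists a nonzero vector h, supported on T (a set of cardinality C(k+j+1,k)), with A h = 0. In particular the number of nonzero rows of A_T is C(k+j+1,j), which is strictly smaller than C(k+j+1,k). -/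
open scoped Classical
open Finset Matrix

noncomputable section

/-!
Every column `τ ⊆ {1,…,N}`, `N = k + j + 1`, of `A_T` vanishes outside the rows `σ ⊆ {1,…,N}`,
so `A_T` has only `C(N,j)` nonzero rows against `C(N,k)` columns, and a wide matrix has a
nontrivial kernel. The count is strict because `C(N,k) = C(N,j+1)` and
`C(N,j+1) (j+1) = C(N,j) (k+1)`.
-/

section WideMatrix

variable {K m p : Type*} [Field K] [Fintype p]

lemma mulVec_dite_mem_eq_colSub_mulVec (A : Matrix m p K) (T : Finset p) (g : T → K) :
    A *ᵥ (fun t => if ht : t ∈ T then g ⟨t, ht⟩ else 0) = colSub A T *ᵥ g := by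
  funext i
  simp only [mulVec, dotProduct, colSub]
  rw [← sum_subset T.subset_univ (fun t _ ht => by rw [dif_neg ht, mul_zero]),
    ← sum_coe_sort T]
  exact sum_congr rfl fun t _ => by rw [dif_pos t.2]

theorem exists_ne_zero_supported_mulVec_eq_zero_of_card_lt [Fintype m] (A : Matrix m p K)
    (T : Finset p) (hcard : #{i | ∃ t ∈ T, A i t ≠ 0} < #T) :
    ∃ h : p → K, h ≠ 0 ∧ (∀ t, h t ≠ 0 → t ∈ T) ∧ A *ᵥ h = 0 := by
  set R : Finset m := {i | ∃ t ∈ T, A i t ≠ 0}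
  let B : Matrix R T K := (colSub A T).submatrix Subtype.val id
  have hker : LinearMap.ker B.mulVecLin ≠ ⊥ :=
    LinearMap.ker_ne_bot_of_finrank_lt (by simpa only [Module.finrank_fintype_fun_eq_card,
      Fintype.card_coe] using hcard)
  obtain ⟨g, hBg, hg⟩ := (Submodule.ne_bot_iff _).1 hker
  rw [LinearMap.mem_ker, mulVecLin_apply] at hBg
  have hAg : colSub A T *ᵥ g = 0 := by
    funext i
    by_cases hi : i ∈ R
    · exact congrFun hBg ⟨i, hi⟩
    · have hzero : ∀ t : T, A i t = 0 := fun t => by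
        by_contra hne
        exact hi (mem_filter.2 ⟨mem_univ _, t, t.2, hne⟩)
      simp [mulVec, dotProduct, colSub, hzero]
  obtain ⟨t₀, hgt₀⟩ := Function.ne_iff.1 hg
  refine ⟨fun t => if ht : t ∈ T then g ⟨t, ht⟩ else 0, fun h0 => hgt₀ ?_, fun s hs => ?_, ?_⟩
  · simpa using congrFun h0 t₀
  · by_contra hsT
    exact hs (dif_neg hsT)
  · rw [mulVec_dite_mem_eq_colSub_mulVec, hAg]

end WideMatrix

lemma card_filter_subset_eq_choose {α : Type*} [Fintype α] [DecidableEq α] (S : Finset α)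
    (r : ℕ) :
    #{τ : {τ : Finset α // τ.card = r} | τ.1 ⊆ S} = S.card.choose r := by
  rw [← card_powersetCard]
  refine card_bij (fun τ _ => τ.1) (fun τ hτ => ?_) (fun _ _ _ _ => Subtype.ext)
    (fun τ hτ => ?_)
  · exact mem_powersetCard.2 ⟨(mem_filter.1 hτ).2, τ.2⟩
  · obtain ⟨hτS, hτ⟩ := mem_powersetCard.1 hτ
    exact ⟨⟨τ, hτ⟩, mem_filter.2 ⟨mem_univ _, hτS⟩, rfl⟩

lemma radon_ne_zero_iff {n j k : ℕ} (hjk : j ≤ k) (σ : {σ : Finset (Fin n) // σ.card = j})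
    (τ : {τ : Finset (Fin n) // τ.card = k}) : radon n j k σ τ ≠ 0 ↔ σ.1 ⊆ τ.1 := by
  by_cases hστ : σ.1 ⊆ τ.1 <;> simp [radon, hστ, (Nat.choose_pos hjk).ne']

lemma exists_radon_ne_zero_subset_iff {n j k : ℕ} {S : Finset (Fin n)} (hjk : j ≤ k)
    (hkS : k ≤ #S) (σ : {σ : Finset (Fin n) // σ.card = j}) :
    (∃ τ : {τ : Finset (Fin n) // τ.card = k}, τ.1 ⊆ S ∧ radon n j k σ τ ≠ 0) ↔ σ.1 ⊆ S := by
  simp only [radon_ne_zero_iff hjk]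
  constructor
  · rintro ⟨τ, hτS, hστ⟩
    exact hστ.trans hτS
  · intro hσS
    obtain ⟨τ, hστ, hτS, hτ⟩ := exists_subsuperset_card_eq hσS (σ.2.trans_le hjk) hkS
    exact ⟨⟨τ, hτ⟩, hτS, hστ⟩

lemma Nat.choose_lt_choose_of_lt_of_add_add_one {j k : ℕ} (hjk : j < k) :
    (k + j + 1).choose j < (k + j + 1).choose k := by
  have hsymm : (k + j + 1).choose k = (k + j + 1).choose (j + 1) := by
    rw [← Nat.choose_symm (by omega : k ≤ k + j + 1)]
    congr 1
    omega
  have hsucc : (k + j + 1).choose (j + 1) * (j + 1) = (k + j + 1).choose j * (k + 1) := by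
    rw [Nat.choose_succ_right_eq]
    congr 2
    omega
  have hpos : 0 < (k + j + 1).choose j := Nat.choose_pos (by omega)
  rw [hsymm]
  refine Nat.lt_of_mul_lt_mul_right (a := j + 1) ?_
  rw [hsucc]
  exact Nat.mul_lt_mul_of_pos_left (by omega) hpos

theorem stmt1_general (n j k : ℕ) (hjk : j < k) (hn : k + j + 1 ≤ n) :
    let T : Finset {τ : Finset (Fin n) // τ.card = k} :=
      Finset.univ.filter (fun τ => ∀ i ∈ τ.1, (i : ℕ) < k + j + 1)
    T.card = (k + j + 1).choose k ∧
    (Finset.univ.filter (fun σ : {σ : Finset (Fin n) // σ.card = j} =>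
        ∃ τ ∈ T, radon n j k σ τ ≠ 0)).card = (k + j + 1).choose j ∧
    (k + j + 1).choose j < (k + j + 1).choose k ∧
    ∃ h : {τ : Finset (Fin n) // τ.card = k} → ℝ, h ≠ 0 ∧
      (∀ τ, h τ ≠ 0 → τ ∈ T) ∧ (radon n j k).mulVec h = 0 := by
  intro T
  set S : Finset (Fin n) := {i | (i : ℕ) < k + j + 1}
  have hS : #S = k + j + 1 := by
    rw [Fin.card_filter_val_lt]
    omega
  have hT : T = univ.filter (fun τ : {τ : Finset (Fin n) // τ.card = k} => τ.1 ⊆ S) := by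
    ext τ
    simp [T, S, subset_iff]
  have hrows : univ.filter (fun σ : {σ : Finset (Fin n) // σ.card = j} =>
      ∃ τ ∈ T, radon n j k σ τ ≠ 0) = univ.filter (fun σ => σ.1 ⊆ S) := by
    ext σ
    simpa [hT] using exists_radon_ne_zero_subset_iff (S := S) hjk.le (by omega) σ
  have hcardT : #T = (k + j + 1).choose k := by
    rw [hT, card_filter_subset_eq_choose, hS]
  have hcardRows : #{σ : {σ : Finset (Fin n) // σ.card = j} | ∃ τ ∈ T, radon n j k σ τ ≠ 0}
      = (k + j + 1).choose j := by
    rw [hrows, card_filter_subset_eq_choose, hS]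
  have hlt := Nat.choose_lt_choose_of_lt_of_add_add_one hjk
  refine ⟨hcardT, hcardRows, hlt, exists_ne_zero_supported_mulVec_eq_zero_of_card_lt _ _ ?_⟩
  rwa [hcardT, hcardRows]

/-- the columns of the Radon matrix indexed by all `k`-subsets of
`{1,…,k+j+1}` are linearly dependent; the set `T` of those columns has cardinality
`C(k+j+1,k)`, and the number of nonzero rows of `A_T` is `C(k+j+1,j) < C(k+j+1,k)`. -/
theorem stmt1 (n j k : ℕ) (hj : 2 ≤ j) (hjk : j < k) (hn : k + j + 1 ≤ n) :
    let T : Finset {τ : Finset (Fin n) // τ.card = k} :=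
      Finset.univ.filter (fun τ => ∀ i ∈ τ.1, (i : ℕ) < k + j + 1)
    T.card = (k + j + 1).choose k ∧
    (Finset.univ.filter (fun σ : {σ : Finset (Fin n) // σ.card = j} =>
        ∃ τ ∈ T, radon n j k σ τ ≠ 0)).card = (k + j + 1).choose j ∧
    (k + j + 1).choose j < (k + j + 1).choose k ∧
    ∃ h : {τ : Finset (Fin n) // τ.card = k} → ℝ, h ≠ 0 ∧
      (∀ τ, h τ ≠ 0 → τ ∈ T) ∧ (radon n j k).mulVec h = 0 :=
  stmt1_general n j k hjk hn
end
end

section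
/- Let A be a real M×N matrix with columns A_1,…,A_N, let x₀ ∈ ℝ^N with support T = supp(x₀), and set b = A x₀. Suppose the columns of A indexed by T are linearly independent (equivalently, A_T^*A_T is invertible) and there exists a vector w ∈ ℝ^M such that ⟨A_q, w⟩ = sign(x₀_q) for every q ∈ T and |⟨A_q, w⟩| < 1 for every q ∉ T. Then x₀ is the unique solution of the problem: minimize ‖x‖₁ subject to A x = b. -/
open scoped Classical
open Finset Matrix

noncomputable section

/-- sufficiency of the dual certificate: if the columns of `A` on the
support `T` of `x₀` are such that `A_T^*A_T` is invertible, and there is `w` with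
`⟨A_q, w⟩ = sign(x₀_q)` on `T` and `|⟨A_q, w⟩| < 1` off `T`, then `x₀` is the unique
`ℓ¹` minimizer subject to `Ax = Ax₀`. -/
theorem stmt2 (M N : ℕ) (A : Matrix (Fin M) (Fin N) ℝ) (x₀ : Fin N → ℝ)
    (T : Finset (Fin N)) (hT : T = Finset.univ.filter (fun q => x₀ q ≠ 0))
    (hInv : IsUnit ((colSub A T)ᵀ * colSub A T))
    (w : Fin M → ℝ)
    (hw1 : ∀ q ∈ T, ∑ i, A i q * w i = Real.sign (x₀ q))
    (hw2 : ∀ q ∉ T, |∑ i, A i q * w i| < 1) :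
    ∀ y : Fin N → ℝ, A.mulVec y = A.mulVec x₀ → y ≠ x₀ →
      vecOneNorm x₀ < vecOneNorm y := by
  intro y hAy hne
  set S : Fin N → ℝ := fun q => ∑ i, A i q * w i with hS
  have hsign : ∀ x : ℝ, Real.sign x * x = |x| := by
    intro x
    rcases lt_trichotomy x 0 with h|h|h
    · rw [Real.sign_of_neg h, abs_of_neg h]; ring
    · simp [h]
    · rw [Real.sign_of_pos h, abs_of_pos h]; ring
  have hsignabs : ∀ x : ℝ, |Real.sign x| ≤ 1 := by
    intro x
    rcases lt_trichotomy x 0 with h|h|h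
    · rw [Real.sign_of_neg h]; norm_num
    · simp [h]
    · rw [Real.sign_of_pos h]; norm_num
  have hx0off : ∀ q ∉ T, x₀ q = 0 := by
    intro q hq; by_contra h; exact hq (by rw [hT]; simp [h])
  have h1 : ∀ z : Fin N → ℝ, ∑ q, S q * z q = ∑ i, w i * A.mulVec z i := by
    intro z
    simp only [hS, Matrix.mulVec, dotProduct, Finset.sum_mul, Finset.mul_sum]
    rw [Finset.sum_comm]
    apply Finset.sum_congr rfl; intro q _
    apply Finset.sum_congr rfl; intro i _
    ring
  have key : ∑ q, S q * y q = ∑ q, S q * x₀ q := by rw [h1, h1, hAy]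
  have hxnorm : ∑ q, S q * x₀ q = vecOneNorm x₀ := by
    unfold vecOneNorm
    apply Finset.sum_congr rfl
    intro q _
    by_cases hq : q ∈ T
    · have : S q = Real.sign (x₀ q) := hw1 q hq
      rw [this, hsign]
    · rw [hx0off q hq]; simp
  have hSle : ∀ q, |S q| ≤ 1 := by
    intro q
    by_cases hq : q ∈ T
    · rw [show S q = Real.sign (x₀ q) from hw1 q hq]; exact hsignabs _
    · exact (hw2 q hq).le
  by_cases hoff : ∀ q ∉ T, y q = 0
  · exfalso
    apply hne
    obtain ⟨u, hu⟩ := hInv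
    have hB : (↑u⁻¹ : Matrix {x // x ∈ T} {x // x ∈ T} ℝ) *
        ((colSub A T)ᵀ * colSub A T) = 1 := by rw [← hu]; exact u.inv_mul
    set v : {x // x ∈ T} → ℝ := fun t => y t.1 - x₀ t.1 with hv
    have hMv : (colSub A T).mulVec v = 0 := by
      funext i
      have : (colSub A T).mulVec v i = ∑ q ∈ T, A i q * (y q - x₀ q) := by
        simp only [Matrix.mulVec, dotProduct, colSub, hv]
        rw [← Finset.sum_coe_sort T (fun q => A i q * (y q - x₀ q))]
      rw [this]
      have hext : ∑ q ∈ T, A i q * (y q - x₀ q) = ∑ q, A i q * (y q - x₀ q) := by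
        apply Finset.sum_subset (Finset.subset_univ T)
        intro q _ hq
        rw [hoff q hq, hx0off q hq]; ring
      rw [hext]
      have : ∑ q, A i q * (y q - x₀ q) = A.mulVec y i - A.mulVec x₀ i := by
        simp only [Matrix.mulVec, dotProduct, ← Finset.sum_sub_distrib]
        apply Finset.sum_congr rfl; intro q _; ring
      rw [this, hAy]
      simp
    have hv0 : v = 0 := by
      have h2 : ((↑u⁻¹ : Matrix {x // x ∈ T} {x // x ∈ T} ℝ) *
          ((colSub A T)ᵀ * colSub A T)).mulVec v = v := by
        rw [hB, Matrix.one_mulVec]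
      rw [← h2, ← Matrix.mulVec_mulVec, ← Matrix.mulVec_mulVec, hMv]
      simp
    funext q
    by_cases hq : q ∈ T
    · have := congrFun hv0 ⟨q, hq⟩
      simp only [hv, Pi.zero_apply] at this
      linarith
    · rw [hoff q hq, hx0off q hq]
  · push_neg at hoff
    obtain ⟨q₀, hq₀, hyq₀⟩ := hoff
    have hlt : ∑ q, S q * y q < ∑ q, |y q| := by
      apply Finset.sum_lt_sum
      · intro q _
        calc S q * y q ≤ |S q * y q| := le_abs_self _
          _ = |S q| * |y q| := abs_mul _ _
          _ ≤ 1 * |y q| := by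
              apply mul_le_mul_of_nonneg_right (hSle q) (abs_nonneg _)
          _ = |y q| := one_mul _
      · refine ⟨q₀, Finset.mem_univ _, ?_⟩
        calc S q₀ * y q₀ ≤ |S q₀| * |y q₀| := by rw [← abs_mul]; exact le_abs_self _
          _ < 1 * |y q₀| := by
              apply mul_lt_mul_of_pos_right (hw2 q₀ hq₀) (abs_pos.2 hyq₀)
          _ = |y q₀| := one_mul _
    calc vecOneNorm x₀ = ∑ q, S q * y q := by rw [key, hxnorm]
      _ < ∑ q, |y q| := hlt
      _ = vecOneNorm y := rfl
end
end

section
/- Let A be a real M×N matrix with columns A_1,…,A_N, let x₀ ∈ ℝ^N with support T = supp(x₀), assume A_T^*A_T is invertible, and set b = A x₀. If x₀ is the unique solution of the problem minimize ‖x‖₁ subject to A x = b, then there exists a vector w ∈ ℝ^M such that ⟨A_q, w⟩ = sign(x₀_q) for every q ∈ T and |⟨A_q, w⟩| < 1 for every q ∉ T. -/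
open scoped Classical
open Finset Matrix

noncomputable section

/-!
Write `s = sign x₀` and `Z` for the zero set of `x₀`. For `v ∈ ker A` the right derivative of
`t ↦ ‖x₀ + t v‖₁` at `0` is `⟨s, v⟩ + ‖v_Z‖₁`, so uniqueness of the minimiser gives
`|⟨s, v⟩| < ‖v_Z‖₁` for `v ≠ 0` in `ker A`, and compactness of the unit sphere of `ker A` improves
this to `|⟨s, v⟩| ≤ ρ ‖v_Z‖₁` with `ρ < 1`. By Hahn–Banach, `-⟨s, ·⟩` extends from `ker A` to a
functional `h ≤ ρ ‖·_Z‖₁`; its coefficients vanish off `Z` and are bounded by `ρ` on `Z`. Then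
`⟨s, ·⟩ + h` vanishes on `ker A`, hence is `⟨Aᵀ w, ·⟩` for some `w`, and `w` is the certificate.
-/

open Filter Topology

lemma eventually_abs_add_mul_eq (a b : ℝ) :
    ∀ᶠ t in 𝓝[≥] 0, |a + t * b| = |a| + t * (Real.sign a * b + if a = 0 then |b| else 0) := by
  have hlim : Tendsto (fun t => a + t * b) (𝓝[≥] 0) (𝓝 a) :=
    ((continuous_const.add (continuous_id.mul continuous_const)).tendsto' 0 a (by simp)).mono_left
      nhdsWithin_le_nhds
  rcases lt_trichotomy a 0 with ha | ha | ha
  · filter_upwards [hlim.eventually (gt_mem_nhds ha)] with t ht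
    rw [abs_of_neg ht, abs_of_neg ha, Real.sign_of_neg ha, if_neg ha.ne]
    ring
  · filter_upwards [self_mem_nhdsWithin] with t (ht : 0 ≤ t)
    simp [ha, abs_mul, abs_of_nonneg ht]
  · filter_upwards [hlim.eventually (lt_mem_nhds ha)] with t ht
    rw [abs_of_pos ht, abs_of_pos ha, Real.sign_of_pos ha, if_neg ha.ne']
    ring

lemma eventually_vecOneNorm_add_smul_eq {ι : Type*} [Fintype ι] (x v : ι → ℝ) :
    ∀ᶠ t in 𝓝[≥] 0, vecOneNorm (x + t • v) =
      vecOneNorm x + t * ((Real.sign ∘ x) ⬝ᵥ v + ∑ q with x q = 0, |v q|) := by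
  filter_upwards [eventually_all.2 fun q => eventually_abs_add_mul_eq (x q) (v q)] with t ht
  simp only [vecOneNorm, Pi.add_apply, Pi.smul_apply, smul_eq_mul, ht, Finset.sum_add_distrib,
    dotProduct, Function.comp_apply, Finset.sum_filter, Finset.mul_sum, mul_add]

lemma dotProduct_sign_add_sum_abs_pos {ι : Type*} [Fintype ι] (x v : ι → ℝ)
    (hmin : ∀ t : ℝ, 0 < t → vecOneNorm x < vecOneNorm (x + t • v)) :
    0 < (Real.sign ∘ x) ⬝ᵥ v + ∑ q with x q = 0, |v q| := by
  obtain ⟨t, hexp, ht⟩ := (((eventually_vecOneNorm_add_smul_eq x v).filter_mono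
    (nhdsWithin_mono _ Set.Ioi_subset_Ici_self)).and self_mem_nhdsWithin).exists
  have := hmin t ht
  rw [hexp] at this
  exact pos_of_mul_pos_right (by linarith) ht.le

lemma abs_dotProduct_sign_lt {ι : Type*} [Fintype ι] (x : ι → ℝ) (K : Submodule ℝ (ι → ℝ))
    (hmin : ∀ v ∈ K, v ≠ 0 → vecOneNorm x < vecOneNorm (x + v)) {v : ι → ℝ} (hv : v ∈ K)
    (hv0 : v ≠ 0) : |(Real.sign ∘ x) ⬝ᵥ v| < ∑ q with x q = 0, |v q| := by
  have key : ∀ u ∈ K, u ≠ 0 → 0 < (Real.sign ∘ x) ⬝ᵥ u + ∑ q with x q = 0, |u q| :=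
    fun u hu hu0 => dotProduct_sign_add_sum_abs_pos x u fun t ht =>
      hmin _ (K.smul_mem t hu) (smul_ne_zero ht.ne' hu0)
  have hneg := key (-v) (K.neg_mem hv) (neg_ne_zero.2 hv0)
  simp only [dotProduct_neg, Pi.neg_apply, abs_neg] at hneg
  exact abs_lt.2 ⟨by linarith [key v hv hv0], by linarith⟩

lemma exists_lt_one_forall_le_mul_of_lt {E : Type*} [NormedAddCommGroup E] [NormedSpace ℝ E]
    [FiniteDimensional ℝ E] (S : Submodule ℝ E) {f g : E → ℝ} (hf : Continuous f)
    (hg : Continuous g) (hf_nonneg : ∀ v, 0 ≤ f v)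
    (hf_smul : ∀ c : ℝ, 0 ≤ c → ∀ v, f (c • v) = c * f v)
    (hg_smul : ∀ c : ℝ, 0 ≤ c → ∀ v, g (c • v) = c * g v)
    (hlt : ∀ v ∈ S, v ≠ 0 → f v < g v) :
    ∃ ρ, 0 ≤ ρ ∧ ρ < 1 ∧ ∀ v ∈ S, f v ≤ ρ * g v := by
  have := FiniteDimensional.proper_real E
  set K := (S : Set E) ∩ Metric.sphere 0 1
  have hgK : ∀ v ∈ K, 0 < g v := fun v hv =>
    (hf_nonneg v).trans_lt (hlt v hv.1 (ne_zero_of_mem_unit_sphere ⟨v, hv.2⟩))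
  suffices ∃ ρ, 0 ≤ ρ ∧ ρ < 1 ∧ ∀ v ∈ K, f v ≤ ρ * g v by
    obtain ⟨ρ, hρ0, hρ1, hρ⟩ := this
    refine ⟨ρ, hρ0, hρ1, fun v hv => ?_⟩
    rcases eq_or_ne v 0 with rfl | hv0
    · have hf0 : f 0 = 0 := by simpa using hf_smul 0 le_rfl 0
      have hg0 : g 0 = 0 := by simpa using hg_smul 0 le_rfl 0
      simp [hf0, hg0]
    have hunit : ‖v‖⁻¹ • v ∈ K := ⟨S.smul_mem _ hv, by simp [norm_smul, hv0]⟩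
    have hv_eq : v = ‖v‖ • (‖v‖⁻¹ • v) := by
      rw [smul_smul, mul_inv_cancel₀ (norm_ne_zero_iff.2 hv0), one_smul]
    rw [hv_eq, hf_smul _ (norm_nonneg v), hg_smul _ (norm_nonneg v), mul_left_comm]
    exact mul_le_mul_of_nonneg_left (hρ _ hunit) (norm_nonneg v)
  rcases K.eq_empty_or_nonempty with hK | hK
  · exact ⟨0, le_rfl, one_pos, by simp [hK]⟩
  have hKc : IsCompact K :=
    (isCompact_sphere 0 1).inter_left S.closed_of_finiteDimensional
  obtain ⟨u, huK, hmax⟩ := hKc.exists_isMaxOn hK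
    (hf.continuousOn.div hg.continuousOn fun v hv => (hgK v hv).ne')
  refine ⟨f u / g u, div_nonneg (hf_nonneg u) (hgK u huK).le,
    (div_lt_one (hgK u huK)).2 (hlt u huK.1 (ne_zero_of_mem_unit_sphere ⟨u, huK.2⟩)),
    fun v hv => ?_⟩
  exact (div_le_iff₀ (hgK v hv)).1 (hmax hv)

lemma exists_extension_le_mul_sum_abs {ι : Type*} [Fintype ι] [DecidableEq ι]
    (K : Submodule ℝ (ι → ℝ)) (ℓ : Module.Dual ℝ (ι → ℝ)) (Z : Finset ι) {ρ : ℝ} (hρ : 0 ≤ ρ)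
    (hℓ : ∀ v ∈ K, ℓ v ≤ ρ * ∑ q ∈ Z, |v q|) :
    ∃ h : Module.Dual ℝ (ι → ℝ), (∀ v ∈ K, h v = ℓ v) ∧
      (∀ q ∉ Z, h (Pi.single q 1) = 0) ∧ ∀ q ∈ Z, |h (Pi.single q 1)| ≤ ρ := by
  set p : (ι → ℝ) → ℝ := fun x => ρ * ∑ q ∈ Z, |x q|
  have p_smul : ∀ c : ℝ, 0 < c → ∀ x, p (c • x) = c * p x := fun c hc x => by
    simp only [p, Pi.smul_apply, smul_eq_mul, abs_mul, abs_of_pos hc, ← Finset.mul_sum]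
    ring
  have p_add : ∀ x y, p (x + y) ≤ p x + p y := fun x y => by
    simp only [p, ← mul_add, ← Finset.sum_add_distrib]
    exact mul_le_mul_of_nonneg_left (Finset.sum_le_sum fun q _ => abs_add_le _ _) hρ
  obtain ⟨h, hext, hle⟩ := exists_extension_of_le_sublinear ⟨K, ℓ.domRestrict K⟩ p p_smul p_add
    fun v => hℓ v v.2
  have habs : ∀ q, |h (Pi.single q 1)| ≤ p (Pi.single q 1) := fun q =>
    abs_le.2 ⟨neg_le.1 (by simpa [p] using hle (-Pi.single q 1)), hle _⟩
  have hp : ∀ q, p (Pi.single q 1) = if q ∈ Z then ρ else 0 := fun q => by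
    simp [p, Pi.single_apply, apply_ite (|·|), Finset.sum_ite_eq']
  refine ⟨h, fun v hv => hext ⟨v, hv⟩, fun q hq => ?_, fun q hq => ?_⟩
  · simpa [hp, hq] using habs q
  · simpa [hp, hq] using habs q

lemma exists_transpose_mulVec_dotProduct_eq {K m n : Type*} [Field K] [Fintype m] [Fintype n]
    [DecidableEq m] (A : Matrix m n K) (g : Module.Dual K (n → K))
    (hg : ∀ v, A *ᵥ v = 0 → g v = 0) : ∃ w, ∀ x, g x = (Aᵀ *ᵥ w) ⬝ᵥ x := by
  have : g ∈ LinearMap.range A.mulVecLin.dualMap := by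
    rw [LinearMap.range_dualMap_eq_dualAnnihilator_ker]
    exact (Submodule.mem_dualAnnihilator _).2 fun v hv => hg v hv
  obtain ⟨φ, rfl⟩ := this
  refine ⟨(dotProductEquiv K m).symm φ, fun x => ?_⟩
  rw [mulVec_transpose, ← dotProduct_mulVec]
  exact (congrArg (· (A *ᵥ x)) ((dotProductEquiv K m).apply_symm_apply φ)).symm

theorem stmt3_general (M N : ℕ) (A : Matrix (Fin M) (Fin N) ℝ) (x₀ : Fin N → ℝ)
    (T : Finset (Fin N)) (hT : T = Finset.univ.filter (fun q => x₀ q ≠ 0))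
    (hUnique : ∀ y : Fin N → ℝ, A.mulVec y = A.mulVec x₀ → y ≠ x₀ →
      vecOneNorm x₀ < vecOneNorm y) :
    ∃ w : Fin M → ℝ,
      (∀ q ∈ T, ∑ i, A i q * w i = Real.sign (x₀ q)) ∧
      (∀ q ∉ T, |∑ i, A i q * w i| < 1) := by
  set K := LinearMap.ker A.mulVecLin
  set s := dotProductEquiv ℝ (Fin N) (Real.sign ∘ x₀)
  have hmin : ∀ v ∈ K, v ≠ 0 → vecOneNorm x₀ < vecOneNorm (x₀ + v) := fun v hv hv0 =>
    hUnique _ (by rw [mulVec_add, ← mulVecLin_apply A v, hv, add_zero]) (by simpa using hv0)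
  obtain ⟨ρ, hρ0, hρ1, hρ⟩ := exists_lt_one_forall_le_mul_of_lt K
    (f := fun v => |(Real.sign ∘ x₀) ⬝ᵥ v|) (g := fun v => ∑ q with x₀ q = 0, |v q|)
    (by fun_prop) (by fun_prop) (fun _ => abs_nonneg _)
    (fun c hc v => by simp [dotProduct_smul, abs_mul, abs_of_nonneg hc])
    (fun c hc v => by simp [abs_mul, abs_of_nonneg hc, Finset.mul_sum])
    (fun _ => abs_dotProduct_sign_lt x₀ K hmin)
  obtain ⟨h, hhK, hhT, hhZ⟩ := exists_extension_le_mul_sum_abs K (-s) {q | x₀ q = 0} hρ0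
    fun v hv => (neg_le_abs _).trans (hρ v hv)
  obtain ⟨w, hw⟩ := exists_transpose_mulVec_dotProduct_eq A (s + h) fun v hv => by
    simp [hhK v hv]
  have hcol : ∀ q, ∑ i, A i q * w i = Real.sign (x₀ q) + h (Pi.single q 1) := fun q => by
    have := hw (Pi.single q 1)
    simp only [s, LinearMap.add_apply, dotProductEquiv_apply_apply, dotProduct_single_one] at this
    exact this.symm
  subst hT
  refine ⟨w, fun q hq => ?_, fun q hq => ?_⟩
  · rw [hcol, hhT q (by simpa using hq), add_zero]
  · have hq0 : x₀ q = 0 := by simpa using hq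
    rw [hcol, hq0, Real.sign_zero, zero_add]
    exact (hhZ q (by simpa using hq0)).trans_lt hρ1

/-- necessity of the dual certificate: if `A_T^*A_T` is invertible on the
support `T` of `x₀` and `x₀` is the unique `ℓ¹` minimizer subject to `Ax = Ax₀`, then
there is a `w` with `⟨A_q, w⟩ = sign(x₀_q)` on `T` and `|⟨A_q, w⟩| < 1` off `T`. -/
theorem stmt3 (M N : ℕ) (A : Matrix (Fin M) (Fin N) ℝ) (x₀ : Fin N → ℝ)
    (T : Finset (Fin N)) (hT : T = Finset.univ.filter (fun q => x₀ q ≠ 0))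
    (hInv : IsUnit ((colSub A T)ᵀ * colSub A T))
    (hUnique : ∀ y : Fin N → ℝ, A.mulVec y = A.mulVec x₀ → y ≠ x₀ →
      vecOneNorm x₀ < vecOneNorm y) :
    ∃ w : Fin M → ℝ,
      (∀ q ∈ T, ∑ i, A i q * w i = Real.sign (x₀ q)) ∧
      (∀ q ∉ T, |∑ i, A i q * w i| < 1) :=
  stmt3_general M N A x₀ T hT hUnique
end
end

section
/- Let A be a real M×N matrix, x₀ ∈ ℝ^N with support T = supp(x₀), and suppose A_T^*A_T is invertible. Then the vector w = A_T (A_T^*A_T)^{−1} sign(x₀)|_T is the unique vector in the column span of A_T satisfying ⟨A_q, w⟩ = sign(x₀_q) for all q ∈ T; moreover, if the irrepresentable condition ‖A_{T^c}^* A_T (A_T^*A_T)^{−1}‖_∞ < 1 holds, then this w also satisfies |⟨A_q, w⟩| < 1 for every q ∈ T^c. -/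
open scoped Classical
open Finset Matrix

noncomputable section

/-- `w = A_T (A_T^*A_T)⁻¹ sign(x₀)|_T` is the unique vector in the column
span of `A_T` with `⟨A_q, w⟩ = sign(x₀_q)` for all `q ∈ T`; and if the irrepresentable
condition `‖A_{T^c}^* A_T (A_T^*A_T)⁻¹‖_∞ < 1` holds, then `|⟨A_q, w⟩| < 1` for all
`q ∈ T^c`. -/
theorem stmt4 (M N : ℕ) (A : Matrix (Fin M) (Fin N) ℝ) (x₀ : Fin N → ℝ)
    (T : Finset (Fin N)) (hT : T = Finset.univ.filter (fun q => x₀ q ≠ 0))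
    (hInv : IsUnit ((colSub A T)ᵀ * colSub A T)) :
    let w : Fin M → ℝ := (colSub A T).mulVec
      ((((colSub A T)ᵀ * colSub A T)⁻¹).mulVec (fun t => Real.sign (x₀ t.1)))
    (∀ q : {x // x ∈ T}, ∑ i, A i q.1 * w i = Real.sign (x₀ q.1)) ∧
    (∀ w' : Fin M → ℝ, (∃ v : {x // x ∈ T} → ℝ, w' = (colSub A T).mulVec v) →
      (∀ q : {x // x ∈ T}, ∑ i, A i q.1 * w' i = Real.sign (x₀ q.1)) → w' = w) ∧
    (matInfNorm ((colSub A Tᶜ)ᵀ * colSub A T * (((colSub A T)ᵀ * colSub A T)⁻¹)) < 1 →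
      ∀ q ∈ Tᶜ, |∑ i, A i q * w i| < 1) := by
  intro w
  set B := colSub A T with hB
  have hdet : IsUnit (Bᵀ * B).det := (Matrix.isUnit_iff_isUnit_det _).mp hInv
  have hcancel : (Bᵀ * B) * (Bᵀ * B)⁻¹ = 1 := Matrix.mul_nonsing_inv _ hdet
  have hcancel' : (Bᵀ * B)⁻¹ * (Bᵀ * B) = 1 := Matrix.nonsing_inv_mul _ hdet
  set s : {x // x ∈ T} → ℝ := fun t => Real.sign (x₀ t.1) with hs
  have hdot : ∀ (u : Fin M → ℝ) (q : {x // x ∈ T}),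
      ∑ i, A i q.1 * u i = Bᵀ.mulVec u q := by
    intro u q
    simp [Matrix.mulVec, dotProduct, Matrix.transpose_apply, hB, colSub, mul_comm]
  have hBtw : Bᵀ.mulVec w = s := by
    show Bᵀ.mulVec (B.mulVec ((Bᵀ * B)⁻¹.mulVec s)) = s
    rw [Matrix.mulVec_mulVec, Matrix.mulVec_mulVec, hcancel, Matrix.one_mulVec]
  refine ⟨?_, ?_, ?_⟩
  · intro q; rw [hdot w q, hBtw]
  · rintro w' ⟨v, rfl⟩ hw'
    have h1 : (Bᵀ * B).mulVec v = s := by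
      funext q
      rw [← Matrix.mulVec_mulVec]
      exact (hdot (B.mulVec v) q).symm.trans (hw' q)
    have h2 : v = (Bᵀ * B)⁻¹.mulVec s := by
      have := congrArg ((Bᵀ * B)⁻¹).mulVec h1
      rwa [Matrix.mulVec_mulVec, hcancel', Matrix.one_mulVec] at this
    rw [h2]
  · intro hIrr q hq
    set C := colSub A Tᶜ with hC
    set Q : Matrix {x // x ∈ Tᶜ} {x // x ∈ T} ℝ := Cᵀ * B * (Bᵀ * B)⁻¹ with hQ
    have hvec : Cᵀ.mulVec w = Q.mulVec s := by
      show Cᵀ.mulVec (B.mulVec ((Bᵀ * B)⁻¹.mulVec s)) = Q.mulVec s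
      rw [Matrix.mulVec_mulVec, Matrix.mulVec_mulVec, hQ]
    have hval : ∑ i, A i q * w i = Q.mulVec s ⟨q, hq⟩ := by
      rw [← hvec]
      simp [Matrix.mulVec, dotProduct, Matrix.transpose_apply, hC, colSub, mul_comm]
    have hsign : ∀ y : ℝ, |Real.sign y| ≤ 1 := by
      intro y; rw [Real.sign]; split_ifs <;> norm_num
    have hrow : |Q.mulVec s ⟨q, hq⟩| ≤ ∑ j, |Q ⟨q, hq⟩ j| := by
      calc |∑ j, Q ⟨q, hq⟩ j * s j| ≤ ∑ j, |Q ⟨q, hq⟩ j * s j| := Finset.abs_sum_le_sum_abs _ _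
        _ ≤ ∑ j, |Q ⟨q, hq⟩ j| := by
            apply Finset.sum_le_sum
            intro j _
            rw [abs_mul]
            calc |Q ⟨q, hq⟩ j| * |s j| ≤ |Q ⟨q, hq⟩ j| * 1 :=
              mul_le_mul_of_nonneg_left (hsign _) (abs_nonneg _)
              _ = _ := mul_one _
    have hle : ∑ j, |Q ⟨q, hq⟩ j| ≤ matInfNorm Q := by
      unfold matInfNorm
      exact le_ciSup (f := fun i : {x // x ∈ Tᶜ} => ∑ j, |Q i j|)
        (Set.Finite.bddAbove (Set.finite_range _)) ⟨q, hq⟩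
    rw [hval]
    exact lt_of_le_of_lt (hrow.trans hle) hIrr
end
end

section
/- Let 2 ≤ j < k ≤ n and A = R^{j,k}. Let T be a set of k-element subsets of {1,…,n} such that any two distinct members σ₁, σ₂ ∈ T satisfy |σ₁ ∩ σ₂| ≤ j−2, and let T^c be the set of all remaining k-element subsets. Then A_T^*A_T is the identity matrix and ‖A_{T^c}^* A_T (A_T^*A_T)^{−1}‖_∞ < 1. -/
open scoped Classical
open Finset Matrix

noncomputable section

lemma gram_entry (n j k : ℕ) (hjk : j ≤ k)
    (τ₁ τ₂ : {τ : Finset (Fin n) // τ.card = k}) :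
    ∑ σ : {σ : Finset (Fin n) // σ.card = j},
        radon n j k σ τ₁ * radon n j k σ τ₂
      = ((τ₁.1 ∩ τ₂.1).card.choose j : ℝ) / (k.choose j : ℝ) := by
  have hc : (0:ℝ) < (k.choose j : ℝ) := by
    exact_mod_cast Nat.choose_pos hjk
  have hterm : ∀ σ : {σ : Finset (Fin n) // σ.card = j},
      radon n j k σ τ₁ * radon n j k σ τ₂
        = if σ.1 ⊆ τ₁.1 ∩ τ₂.1 then 1 / (k.choose j : ℝ) else 0 := by
    intro σ
    simp only [radon, Finset.subset_inter_iff]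
    have hsqrt : Real.sqrt (k.choose j) * Real.sqrt (k.choose j)
        = (k.choose j : ℝ) := Real.mul_self_sqrt hc.le
    by_cases h1 : σ.1 ⊆ τ₁.1 <;> by_cases h2 : σ.1 ⊆ τ₂.1 <;>
      simp [h1, h2, one_div, ← mul_inv, hsqrt]
  simp only [hterm]
  have hsub : ∀ σ : Finset (Fin n),
      σ ∈ (univ : Finset (Fin n)).powersetCard j ↔ σ.card = j := by
    intro σ; simp [Finset.mem_powersetCard_univ]
  rw [← Finset.sum_subtype ((univ : Finset (Fin n)).powersetCard j) hsub
      (fun σ => if σ ⊆ τ₁.1 ∩ τ₂.1 then 1 / (k.choose j : ℝ) else 0)]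
  rw [← Finset.sum_filter]
  have hfil : ((univ : Finset (Fin n)).powersetCard j).filter
      (fun σ => σ ⊆ τ₁.1 ∩ τ₂.1) = (τ₁.1 ∩ τ₂.1).powersetCard j := by
    ext σ
    simp [Finset.mem_powersetCard, Finset.mem_powersetCard_univ, and_comm]
  rw [hfil, Finset.sum_const, Finset.card_powersetCard]
  simp [div_eq_mul_inv, mul_comm]

lemma count_bound (n j k : ℕ) (hj : 2 ≤ j) (hjk : j < k)
    (T : Finset {τ : Finset (Fin n) // τ.card = k})
    (hsep : ∀ σ₁ ∈ T, ∀ σ₂ ∈ T, σ₁ ≠ σ₂ → (σ₁.1 ∩ σ₂.1).card ≤ j - 2)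
    (τ' : {τ : Finset (Fin n) // τ.card = k}) (hτ' : τ' ∉ T) :
    ∑ t ∈ T, ((τ'.1 ∩ t.1).card.choose j) ≤ k.choose j - 1 := by
  classical
  set S : {τ : Finset (Fin n) // τ.card = k} → Finset (Finset (Fin n)) :=
    fun t => (τ'.1 ∩ t.1).powersetCard j with hS
  have hcard : ∀ t, ((τ'.1 ∩ t.1).card.choose j) = (S t).card := by
    intro t; rw [hS]; simp [Finset.card_powersetCard]
  have hdisj : ∀ t₁ ∈ T, ∀ t₂ ∈ T, t₁ ≠ t₂ → Disjoint (S t₁) (S t₂) := by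
    intro t₁ h₁ t₂ h₂ hne
    rw [Finset.disjoint_left]
    intro σ hσ1 hσ2
    rw [hS] at hσ1 hσ2
    simp only [Finset.mem_powersetCard] at hσ1 hσ2
    have hsub : σ ⊆ t₁.1 ∩ t₂.1 := by
      refine Finset.subset_inter ?_ ?_
      · exact hσ1.1.trans Finset.inter_subset_right
      · exact hσ2.1.trans Finset.inter_subset_right
    have := (Finset.card_le_card hsub).trans (hsep t₁ h₁ t₂ h₂ hne)
    omega
  have hsum : ∑ t ∈ T, (S t).card = (T.biUnion S).card :=
    (Finset.card_biUnion hdisj).symm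
  have hbound : (T.biUnion S).card ≤ k.choose j - 1 := by
    rcases (T.biUnion S).eq_empty_or_nonempty with he | ⟨σ₀, hσ₀⟩
    · rw [he]; simp
    · rw [Finset.mem_biUnion] at hσ₀
      obtain ⟨t₀, ht₀T, hσ₀t₀⟩ := hσ₀
      rw [hS] at hσ₀t₀
      simp only [Finset.mem_powersetCard] at hσ₀t₀
      obtain ⟨hσ₀sub, hσ₀card⟩ := hσ₀t₀
      -- τ'.1 ≠ t₀.1, so there is x ∈ τ'.1 \ t₀.1
      have hne : τ'.1 ≠ t₀.1 := by
        intro h; exact hτ' (by rwa [Subtype.ext h])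
      have hnsub : ¬ τ'.1 ⊆ t₀.1 := by
        intro h
        exact hne (Finset.eq_of_subset_of_card_le h (by rw [τ'.2, t₀.2]))
      obtain ⟨x, hxτ', hxt₀⟩ := Finset.not_subset.mp hnsub
      have hσ₀ne : σ₀.Nonempty := by
        rw [← Finset.card_pos, hσ₀card]; omega
      obtain ⟨y, hy⟩ := hσ₀ne
      set σ₁ : Finset (Fin n) := insert x (σ₀.erase y) with hσ₁def
      have hxσ₀ : x ∉ σ₀ := fun h =>
        hxt₀ ((hσ₀sub.trans Finset.inter_subset_right) h)
      have hxe : x ∉ σ₀.erase y := fun h => hxσ₀ (Finset.mem_of_mem_erase h)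
      have hσ₁card : σ₁.card = j := by
        rw [hσ₁def, Finset.card_insert_of_notMem hxe,
          Finset.card_erase_of_mem hy, hσ₀card]
        omega
      have hσ₁sub : σ₁ ⊆ τ'.1 := by
        rw [hσ₁def, Finset.insert_subset_iff]
        exact ⟨hxτ', (Finset.erase_subset y σ₀).trans
          (hσ₀sub.trans Finset.inter_subset_left)⟩
      have hσ₁mem : σ₁ ∈ τ'.1.powersetCard j :=
        Finset.mem_powersetCard.mpr ⟨hσ₁sub, hσ₁card⟩
      have hσ₁not : σ₁ ∉ T.biUnion S := by
        rw [Finset.mem_biUnion]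
        rintro ⟨t, htT, hσ₁t⟩
        rw [hS] at hσ₁t
        simp only [Finset.mem_powersetCard] at hσ₁t
        have hσ₁subt : σ₁ ⊆ t.1 := hσ₁t.1.trans Finset.inter_subset_right
        by_cases h : t = t₀
        · subst h
          exact hxt₀ (hσ₁subt (Finset.mem_insert_self x _))
        · have hesub : σ₀.erase y ⊆ t₀.1 ∩ t.1 := by
            refine Finset.subset_inter ?_ ?_
            · exact (Finset.erase_subset y σ₀).trans
                (hσ₀sub.trans Finset.inter_subset_right)
            · exact (Finset.subset_insert x _).trans hσ₁subt
          have h1 := Finset.card_le_card hesub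
          have h2 := hsep t₀ ht₀T t htT (fun hh => h hh.symm)
          rw [Finset.card_erase_of_mem hy, hσ₀card] at h1
          omega
      have hsubset : T.biUnion S ⊆ (τ'.1.powersetCard j).erase σ₁ := by
        intro σ hσ
        rw [Finset.mem_biUnion] at hσ
        obtain ⟨t, htT, hσt⟩ := hσ
        rw [hS] at hσt
        simp only [Finset.mem_powersetCard] at hσt
        refine Finset.mem_erase.mpr ⟨?_, Finset.mem_powersetCard.mpr
          ⟨hσt.1.trans Finset.inter_subset_left, hσt.2⟩⟩
        rintro rfl
        exact hσ₁not (Finset.mem_biUnion.mpr ⟨t, htT, by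
          rw [hS]; exact Finset.mem_powersetCard.mpr hσt⟩)
      calc (T.biUnion S).card ≤ ((τ'.1.powersetCard j).erase σ₁).card :=
            Finset.card_le_card hsubset
        _ = (τ'.1.powersetCard j).card - 1 :=
            Finset.card_erase_of_mem hσ₁mem
        _ = k.choose j - 1 := by rw [Finset.card_powersetCard, τ'.2]
  calc ∑ t ∈ T, ((τ'.1 ∩ t.1).card.choose j)
      = ∑ t ∈ T, (S t).card := by simp_rw [hcard]
    _ = (T.biUnion S).card := hsum
    _ ≤ k.choose j - 1 := hbound

/-- if any two distinct cliques in `T` overlap in at most `j-2` nodes,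
then `A_T^*A_T = I` and the irrepresentable condition holds strictly:
`‖A_{T^c}^* A_T (A_T^*A_T)⁻¹‖_∞ < 1`. -/
theorem stmt5 (n j k : ℕ) (hj : 2 ≤ j) (hjk : j < k) (hk : k ≤ n)
    (T : Finset {τ : Finset (Fin n) // τ.card = k})
    (hsep : ∀ σ₁ ∈ T, ∀ σ₂ ∈ T, σ₁ ≠ σ₂ → (σ₁.1 ∩ σ₂.1).card ≤ j - 2) :
    (colSub (radon n j k) T)ᵀ * colSub (radon n j k) T = 1 ∧
    matInfNorm ((colSub (radon n j k) Tᶜ)ᵀ * colSub (radon n j k) T *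
      (((colSub (radon n j k) T)ᵀ * colSub (radon n j k) T)⁻¹)) < 1 := by
  have hc : (0:ℝ) < (k.choose j : ℝ) := by
    exact_mod_cast Nat.choose_pos hjk.le
  have hgram : (colSub (radon n j k) T)ᵀ * colSub (radon n j k) T = 1 := by
    ext t₁ t₂
    rw [Matrix.mul_apply]
    simp only [colSub, Matrix.transpose_apply]
    rw [gram_entry n j k hjk.le t₁.1 t₂.1]
    by_cases h : t₁ = t₂
    · subst h
      rw [Finset.inter_self, t₁.1.2, Matrix.one_apply_eq, div_self hc.ne']
    · have hne : t₁.1 ≠ t₂.1 := fun hh => h (Subtype.ext hh)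
      have hle := hsep t₁.1 t₁.2 t₂.1 t₂.2 hne
      have : ((t₁.1.1 ∩ t₂.1.1).card.choose j) = 0 :=
        Nat.choose_eq_zero_of_lt (by omega)
      rw [this, Matrix.one_apply_ne h]
      simp
  refine ⟨hgram, ?_⟩
  rw [hgram, inv_one, Matrix.mul_one]
  -- bound each row sum
  have hrow : ∀ τ' : {x // x ∈ Tᶜ},
      ∑ t : {x // x ∈ T},
        |((colSub (radon n j k) Tᶜ)ᵀ * colSub (radon n j k) T) τ' t|
      ≤ ((k.choose j : ℝ) - 1) / (k.choose j : ℝ) := by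
    intro τ'
    have hentry : ∀ t : {x // x ∈ T},
        ((colSub (radon n j k) Tᶜ)ᵀ * colSub (radon n j k) T) τ' t
          = ((τ'.1.1 ∩ t.1.1).card.choose j : ℝ) / (k.choose j : ℝ) := by
      intro t
      rw [Matrix.mul_apply]
      simp only [colSub, Matrix.transpose_apply]
      exact gram_entry n j k hjk.le τ'.1 t.1
    have habs : ∀ t : {x // x ∈ T},
        |((colSub (radon n j k) Tᶜ)ᵀ * colSub (radon n j k) T) τ' t|
          = ((τ'.1.1 ∩ t.1.1).card.choose j : ℝ) / (k.choose j : ℝ) := by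
      intro t
      rw [hentry t, abs_of_nonneg (by positivity)]
    simp only [habs]
    have hτ'notT : τ'.1 ∉ T := Finset.mem_compl.mp τ'.2
    have hnat := count_bound n j k hj hjk T hsep τ'.1 hτ'notT
    have hsum : ∑ t : {x // x ∈ T},
        (((τ'.1.1 ∩ t.1.1).card.choose j : ℝ) / (k.choose j : ℝ))
        = (∑ t ∈ T, ((τ'.1.1 ∩ t.1).card.choose j : ℝ)) / (k.choose j : ℝ) := by
      rw [← Finset.sum_div]
      congr 1
      exact Finset.sum_coe_sort T
        (fun t => ((τ'.1.1 ∩ t.1).card.choose j : ℝ))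
    rw [hsum]
    apply div_le_div_of_nonneg_right ?_ hc.le |>.trans_eq rfl
    · have hC1 : 1 ≤ k.choose j := Nat.choose_pos hjk.le
      have : ((∑ t ∈ T, ((τ'.1.1 ∩ t.1).card.choose j) : ℕ) : ℝ)
          ≤ ((k.choose j - 1 : ℕ) : ℝ) := by exact_mod_cast hnat
      push_cast [Nat.cast_sub hC1] at this
      calc ∑ t ∈ T, ((τ'.1.1 ∩ t.1).card.choose j : ℝ)
          = ((∑ t ∈ T, ((τ'.1.1 ∩ t.1).card.choose j) : ℕ) : ℝ) := by
            push_cast; ring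
        _ ≤ (k.choose j : ℝ) - 1 := by push_cast; exact this
  have hlt : ((k.choose j : ℝ) - 1) / (k.choose j : ℝ) < 1 := by
    rw [div_lt_one hc]; linarith
  rw [matInfNorm]
  by_cases hne : Nonempty {x // x ∈ Tᶜ}
  · exact lt_of_le_of_lt (ciSup_le hrow) hlt
  · rw [not_nonempty_iff] at hne
    rw [Real.iSup_of_isEmpty]
    norm_num
end
end

section
/- For all integers 2 ≤ j < k there exist an integer n ≥ k and a set T of k-element subsets of {1,…,n}, any two distinct members of which intersect in at most j−1 elements, such that for A = R^{j,k} (with this n, and T^c the set of all remaining k-element subsets) one has ‖A_{T^c}^* A_T (A_T^*A_T)^{−1}‖_∞ = 1. In particular, one may take |T| = C(k,j), with each member of T the union of a distinct j-subset of {1,…,k} and a distinct (k−j)-subset of {k+1,…,n}, the latter (k−j)-subsets being pairwise disjoint. -/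
open scoped Classical
open Finset Matrix

noncomputable section

namespace Stmt7Aux

variable (j k : ℕ)

/-- The ambient size. -/
def nn : ℕ := k + k.choose j * (k - j)

/-- The "head": first `k` coordinates. -/
def hd : Finset (Fin (nn j k)) := (Finset.range k).attachFin (fun x hx => by
  have := Finset.mem_range.mp hx
  unfold nn; omega)

lemma mem_hd (x : Fin (nn j k)) : x ∈ hd j k ↔ (x : ℕ) < k := by
  simp [hd, Finset.mem_attachFin]

lemma card_hd : (hd j k).card = k := by
  simp [hd, Finset.card_attachFin]

/-- The `i`-th tail block of size `k - j`. -/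
def tl (i : Fin (k.choose j)) : Finset (Fin (nn j k)) :=
  (Finset.Ico (k + (i : ℕ) * (k - j)) (k + (i : ℕ) * (k - j) + (k - j))).attachFin
    (fun x hx => by
      have hx' := Finset.mem_Ico.mp hx
      have h1 : ((i : ℕ) + 1) * (k - j) ≤ k.choose j * (k - j) :=
        Nat.mul_le_mul_right _ i.isLt
      have h2 : ((i : ℕ) + 1) * (k - j) = (i : ℕ) * (k - j) + (k - j) := by ring
      unfold nn; omega)

lemma mem_tl (i : Fin (k.choose j)) (x : Fin (nn j k)) :
    x ∈ tl j k i ↔ k + (i : ℕ) * (k - j) ≤ (x : ℕ) ∧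
      (x : ℕ) < k + (i : ℕ) * (k - j) + (k - j) := by
  simp [tl, Finset.mem_attachFin, Finset.mem_Ico]

lemma card_tl (i : Fin (k.choose j)) : (tl j k i).card = k - j := by
  simp [tl, Finset.card_attachFin]

lemma tl_disjoint {i₁ i₂ : Fin (k.choose j)} (h : i₁ ≠ i₂) :
    Disjoint (tl j k i₁) (tl j k i₂) := by
  rw [Finset.disjoint_left]
  intro x hx1 hx2
  rw [mem_tl] at hx1 hx2
  rcases lt_trichotomy (i₁ : ℕ) (i₂ : ℕ) with hlt | heq | hlt
  · have h1 : ((i₁ : ℕ) + 1) * (k - j) ≤ (i₂ : ℕ) * (k - j) :=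
      Nat.mul_le_mul_right _ hlt
    have h2 : ((i₁ : ℕ) + 1) * (k - j) = (i₁ : ℕ) * (k - j) + (k - j) := by ring
    omega
  · exact h (Fin.ext heq)
  · have h1 : ((i₂ : ℕ) + 1) * (k - j) ≤ (i₁ : ℕ) * (k - j) :=
      Nat.mul_le_mul_right _ hlt
    have h2 : ((i₂ : ℕ) + 1) * (k - j) = (i₂ : ℕ) * (k - j) + (k - j) := by ring
    omega

lemma card_J : (Finset.powersetCard j (hd j k)).card = k.choose j := by
  rw [Finset.card_powersetCard, card_hd]

/-- Indexing of `j`-subsets of the head by `Fin (C(k,j))`. -/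
def idx : {s // s ∈ Finset.powersetCard j (hd j k)} ≃ Fin (k.choose j) :=
  (Finset.powersetCard j (hd j k)).equivFinOfCardEq (card_J j k)

/-- The map sending a `j`-subset of the head to the corresponding member of `T`. -/
def gfun (hjk : j < k) (s : {s // s ∈ Finset.powersetCard j (hd j k)}) :
    {τ : Finset (Fin (nn j k)) // τ.card = k} :=
  ⟨s.1 ∪ tl j k (idx j k s), by
    have hs := Finset.mem_powersetCard.mp s.2
    have hdisj : Disjoint s.1 (tl j k (idx j k s)) := by
      rw [Finset.disjoint_left]
      intro x hx1 hx2
      have h1 := (mem_hd j k x).mp (hs.1 hx1)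
      have h2 := ((mem_tl j k _ x).mp hx2).1
      omega
    rw [Finset.card_union_of_disjoint hdisj, hs.2, card_tl]
    omega⟩

lemma gfun_val (hjk : j < k) (s) :
    (gfun j k hjk s).1 = s.1 ∪ tl j k (idx j k s) := rfl

lemma gfun_inter_hd (hjk : j < k) (s) : (gfun j k hjk s).1 ∩ hd j k = s.1 := by
  have hs := (Finset.mem_powersetCard.mp s.2).1
  ext x
  rw [gfun_val, Finset.mem_inter, Finset.mem_union]
  constructor
  · rintro ⟨h1 | h1, h2⟩
    · exact h1
    · have h3 := ((mem_tl j k _ x).mp h1).1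
      have h4 := (mem_hd j k x).mp h2
      omega
  · intro hx
    exact ⟨Or.inl hx, hs hx⟩

lemma gfun_inj (hjk : j < k) : Function.Injective (gfun j k hjk) := by
  intro s₁ s₂ h
  apply Subtype.ext
  have h1 : (gfun j k hjk s₁).1 = (gfun j k hjk s₂).1 := by rw [h]
  rw [← gfun_inter_hd j k hjk s₁, ← gfun_inter_hd j k hjk s₂, h1]

/-- The set `T`. -/
def TT (hjk : j < k) : Finset {τ : Finset (Fin (nn j k)) // τ.card = k} :=
  (Finset.powersetCard j (hd j k)).attach.image (gfun j k hjk)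

lemma card_TT (hjk : j < k) : (TT j k hjk).card = k.choose j := by
  rw [TT, Finset.card_image_of_injective _ (gfun_inj j k hjk), Finset.card_attach, card_J]

lemma inter_eq (hjk : j < k) (s₁ s₂) (hne : s₁ ≠ s₂) :
    (gfun j k hjk s₁).1 ∩ (gfun j k hjk s₂).1 = s₁.1 ∩ s₂.1 := by
  have hidx : idx j k s₁ ≠ idx j k s₂ := fun h => hne ((idx j k).injective h)
  ext x
  rw [gfun_val, gfun_val, Finset.mem_inter, Finset.mem_union, Finset.mem_union,
    Finset.mem_inter]
  constructor
  · rintro ⟨h1 | h1, h2 | h2⟩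
    · exact ⟨h1, h2⟩
    · exfalso
      have h3 := (mem_hd j k x).mp ((Finset.mem_powersetCard.mp s₁.2).1 h1)
      have h4 := ((mem_tl j k _ x).mp h2).1
      omega
    · exfalso
      have h3 := (mem_hd j k x).mp ((Finset.mem_powersetCard.mp s₂.2).1 h2)
      have h4 := ((mem_tl j k _ x).mp h1).1
      omega
    · exact (Finset.disjoint_left.mp (tl_disjoint j k hidx) h1 h2).elim
  · rintro ⟨h1, h2⟩
    exact ⟨Or.inl h1, Or.inl h2⟩

lemma inter_card_le (hjk : j < k) (τ₁ τ₂ : {τ : Finset (Fin (nn j k)) // τ.card = k})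
    (h₁ : τ₁ ∈ TT j k hjk) (h₂ : τ₂ ∈ TT j k hjk) (hne : τ₁ ≠ τ₂) :
    (τ₁.1 ∩ τ₂.1).card ≤ j - 1 := by
  obtain ⟨s₁, -, rfl⟩ := Finset.mem_image.mp h₁
  obtain ⟨s₂, -, rfl⟩ := Finset.mem_image.mp h₂
  have hs : s₁ ≠ s₂ := fun h => hne (by rw [h])
  rw [inter_eq j k hjk s₁ s₂ hs]
  have hc1 := (Finset.mem_powersetCard.mp s₁.2).2
  have hc2 := (Finset.mem_powersetCard.mp s₂.2).2
  have hle : (s₁.1 ∩ s₂.1).card ≤ j := by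
    calc (s₁.1 ∩ s₂.1).card ≤ s₁.1.card := Finset.card_le_card Finset.inter_subset_left
    _ = j := hc1
  rcases Nat.lt_or_ge (s₁.1 ∩ s₂.1).card j with h | h
  · omega
  · exfalso
    have heq : s₁.1 ∩ s₂.1 = s₁.1 :=
      Finset.eq_of_subset_of_card_le Finset.inter_subset_left (by omega)
    have hsub : s₁.1 ⊆ s₂.1 := by
      rw [← heq]; exact Finset.inter_subset_right
    have : s₁.1 = s₂.1 := Finset.eq_of_subset_of_card_le hsub (by omega)
    exact hs (Subtype.ext this)

lemma unique_sub (hj : 2 ≤ j) (hjk : j < k) {σ : Finset (Fin (nn j k))} (hσ : σ.card = j)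
    {τ₁ τ₂ : {τ : Finset (Fin (nn j k)) // τ.card = k}}
    (h₁ : τ₁ ∈ TT j k hjk) (h₂ : τ₂ ∈ TT j k hjk)
    (hs₁ : σ ⊆ τ₁.1) (hs₂ : σ ⊆ τ₂.1) : τ₁ = τ₂ := by
  by_contra hne
  have h := inter_card_le j k hjk τ₁ τ₂ h₁ h₂ hne
  have hsub : σ ⊆ τ₁.1 ∩ τ₂.1 := Finset.subset_inter hs₁ hs₂
  have := Finset.card_le_card hsub
  omega

lemma sum_ind (u : Finset (Fin (nn j k))) (x : ℝ) :
    ∑ σ : {σ : Finset (Fin (nn j k)) // σ.card = j}, (if σ.1 ⊆ u then x else 0)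
      = ((Finset.powersetCard j u).card : ℝ) * x := by
  classical
  rw [← Finset.sum_filter, Finset.sum_const, nsmul_eq_mul]
  suffices h : (Finset.univ.filter
      (fun σ : {σ : Finset (Fin (nn j k)) // σ.card = j} => σ.1 ⊆ u)).card
      = (Finset.powersetCard j u).card by rw [h]
  apply Finset.card_bij (fun σ _ => σ.1)
  · intro σ hσ
    rw [Finset.mem_powersetCard]
    exact ⟨(Finset.mem_filter.mp hσ).2, σ.2⟩
  · intro σ₁ _ σ₂ _ h
    exact Subtype.ext h
  · intro a ha
    rw [Finset.mem_powersetCard] at ha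
    exact ⟨⟨a, ha.2⟩, Finset.mem_filter.mpr ⟨Finset.mem_univ _, ha.1⟩, rfl⟩

lemma entry_eq (S₁ S₂ : Finset {τ : Finset (Fin (nn j k)) // τ.card = k})
    (t₁ : {x // x ∈ S₁}) (t₂ : {x // x ∈ S₂}) :
    ((colSub (radon (nn j k) j k) S₁)ᵀ * colSub (radon (nn j k) j k) S₂) t₁ t₂
      = ((Finset.powersetCard j (t₁.1.1 ∩ t₂.1.1)).card : ℝ) *
        (1 / Real.sqrt (k.choose j)) ^ 2 := by
  rw [Matrix.mul_apply]
  have key : ∀ σ : {σ : Finset (Fin (nn j k)) // σ.card = j},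
      (colSub (radon (nn j k) j k) S₁)ᵀ t₁ σ * colSub (radon (nn j k) j k) S₂ σ t₂
        = if σ.1 ⊆ t₁.1.1 ∩ t₂.1.1 then (1 / Real.sqrt (k.choose j)) ^ 2 else 0 := by
    intro σ
    simp only [Matrix.transpose_apply, colSub, radon, Finset.subset_inter_iff]
    by_cases h1 : σ.1 ⊆ t₁.1.1 <;> by_cases h2 : σ.1 ⊆ t₂.1.1 <;>
      simp [h1, h2, pow_two]
  rw [Finset.sum_congr rfl (fun σ _ => key σ), sum_ind]

lemma choose_pos_real (hjk : j < k) : (0 : ℝ) < (k.choose j : ℝ) := by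
  exact_mod_cast Nat.choose_pos hjk.le

lemma csq (hjk : j < k) :
    (1 / Real.sqrt (k.choose j)) ^ 2 = 1 / (k.choose j : ℝ) := by
  rw [div_pow, one_pow, Real.sq_sqrt (choose_pos_real j k hjk).le]

lemma gram_one (hj : 2 ≤ j) (hjk : j < k) :
    (colSub (radon (nn j k) j k) (TT j k hjk))ᵀ * colSub (radon (nn j k) j k) (TT j k hjk)
      = 1 := by
  have hC := choose_pos_real j k hjk
  ext t₁ t₂
  rw [entry_eq]
  by_cases h : t₁ = t₂
  · subst h
    rw [Finset.inter_self, Finset.card_powersetCard, t₁.1.2, Matrix.one_apply_eq,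
      csq j k hjk]
    field_simp
  · rw [Matrix.one_apply_ne h]
    have hemp : Finset.powersetCard j (t₁.1.1 ∩ t₂.1.1) = ∅ := by
      rw [Finset.eq_empty_iff_forall_notMem]
      intro σ hσ
      rw [Finset.mem_powersetCard, Finset.subset_inter_iff] at hσ
      exact h (Subtype.ext (unique_sub j k hj hjk hσ.2 t₁.2 t₂.2 hσ.1.1 hσ.1.2))
    rw [hemp]
    simp

/-- The base column: the head itself. -/
def basePt : {τ : Finset (Fin (nn j k)) // τ.card = k} := ⟨hd j k, card_hd j k⟩

lemma basePt_notMem (hjk : j < k) : basePt j k ∉ TT j k hjk := by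
  intro h
  obtain ⟨s, -, hs⟩ := Finset.mem_image.mp h
  have h1 : (gfun j k hjk s).1 = hd j k := congrArg Subtype.val hs
  have hne : (tl j k (idx j k s)).Nonempty := by
    rw [← Finset.card_pos, card_tl]; omega
  obtain ⟨x, hx⟩ := hne
  have hx1 : x ∈ (gfun j k hjk s).1 := by
    rw [gfun_val]; exact Finset.mem_union_right _ hx
  rw [h1, mem_hd] at hx1
  have := ((mem_tl j k _ x).mp hx).1
  omega

lemma sum_card_le (hj : 2 ≤ j) (hjk : j < k)
    (t' : {τ : Finset (Fin (nn j k)) // τ.card = k}) :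
    ∑ t : {x // x ∈ TT j k hjk}, (Finset.powersetCard j (t'.1 ∩ t.1.1)).card
      ≤ k.choose j := by
  classical
  have hdisj : ∀ t₁ ∈ (Finset.univ : Finset {x // x ∈ TT j k hjk}),
      ∀ t₂ ∈ (Finset.univ : Finset {x // x ∈ TT j k hjk}), t₁ ≠ t₂ →
      Disjoint (Finset.powersetCard j (t'.1 ∩ t₁.1.1))
        (Finset.powersetCard j (t'.1 ∩ t₂.1.1)) := by
    intro t₁ _ t₂ _ hne
    rw [Finset.disjoint_left]
    intro σ h1 h2
    rw [Finset.mem_powersetCard, Finset.subset_inter_iff] at h1 h2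
    exact hne (Subtype.ext (unique_sub j k hj hjk h1.2 t₁.2 t₂.2 h1.1.2 h2.1.2))
  rw [← Finset.card_biUnion hdisj]
  have hsub : (Finset.univ.biUnion fun t : {x // x ∈ TT j k hjk} =>
      Finset.powersetCard j (t'.1 ∩ t.1.1)) ⊆ Finset.powersetCard j t'.1 := by
    intro σ hσ
    rw [Finset.mem_biUnion] at hσ
    obtain ⟨t, -, ht⟩ := hσ
    rw [Finset.mem_powersetCard] at ht ⊢
    exact ⟨ht.1.trans Finset.inter_subset_left, ht.2⟩
  calc (Finset.univ.biUnion fun t : {x // x ∈ TT j k hjk} =>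
      Finset.powersetCard j (t'.1 ∩ t.1.1)).card
      ≤ (Finset.powersetCard j t'.1).card := Finset.card_le_card hsub
  _ = k.choose j := by rw [Finset.card_powersetCard, t'.2]

lemma sum_card_base (hj : 2 ≤ j) (hjk : j < k) :
    ∑ t : {x // x ∈ TT j k hjk},
      (Finset.powersetCard j ((basePt j k).1 ∩ t.1.1)).card = k.choose j := by
  apply le_antisymm (sum_card_le j k hj hjk (basePt j k))
  have h1 : ∀ t : {x // x ∈ TT j k hjk},
      1 ≤ (Finset.powersetCard j ((basePt j k).1 ∩ t.1.1)).card := by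
    intro t
    obtain ⟨s, -, hs⟩ := Finset.mem_image.mp t.2
    show 0 < _
    rw [Finset.card_pos]
    refine ⟨s.1, ?_⟩
    rw [Finset.mem_powersetCard]
    refine ⟨Finset.subset_inter (Finset.mem_powersetCard.mp s.2).1 ?_,
      (Finset.mem_powersetCard.mp s.2).2⟩
    rw [← hs, gfun_val]
    exact Finset.subset_union_left
  calc k.choose j = ∑ _t : {x // x ∈ TT j k hjk}, 1 := by
        rw [Finset.sum_const, smul_eq_mul, mul_one, Finset.card_univ, Fintype.card_coe, card_TT]
  _ ≤ _ := Finset.sum_le_sum (fun t _ => h1 t)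

end Stmt7Aux

/-- for all `2 ≤ j < k` there exist `n ≥ k` and a set `T` of `k`-cliques,
pairwise overlapping in at most `j-1` nodes, with `|T| = C(k,j)`, such that
`‖A_{T^c}^* A_T (A_T^*A_T)⁻¹‖_∞ = 1`. -/
theorem stmt7 (j k : ℕ) (hj : 2 ≤ j) (hjk : j < k) :
    ∃ n, k ≤ n ∧ ∃ T : Finset {τ : Finset (Fin n) // τ.card = k},
      (∀ σ₁ ∈ T, ∀ σ₂ ∈ T, σ₁ ≠ σ₂ → (σ₁.1 ∩ σ₂.1).card ≤ j - 1) ∧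
      T.card = k.choose j ∧
      matInfNorm ((colSub (radon n j k) Tᶜ)ᵀ * colSub (radon n j k) T *
        (((colSub (radon n j k) T)ᵀ * colSub (radon n j k) T)⁻¹)) = 1 := by
  classical
  refine ⟨Stmt7Aux.nn j k, by unfold Stmt7Aux.nn; omega, Stmt7Aux.TT j k hjk,
    fun σ₁ h₁ σ₂ h₂ hne => Stmt7Aux.inter_card_le j k hjk σ₁ σ₂ h₁ h₂ hne,
    Stmt7Aux.card_TT j k hjk, ?_⟩
  rw [Stmt7Aux.gram_one j k hj hjk, inv_one, Matrix.mul_one]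
  set A := radon (Stmt7Aux.nn j k) j k with hA
  set T := Stmt7Aux.TT j k hjk with hT
  have hC := Stmt7Aux.choose_pos_real j k hjk
  -- the base point lies in the complement
  have hbmem : Stmt7Aux.basePt j k ∈ Tᶜ :=
    Finset.mem_compl.mpr (Stmt7Aux.basePt_notMem j k hjk)
  haveI : Nonempty {x // x ∈ Tᶜ} := ⟨⟨Stmt7Aux.basePt j k, hbmem⟩⟩
  -- row sums
  have key : ∀ t' : {x // x ∈ Tᶜ},
      ∑ t : {x // x ∈ T}, |((colSub A Tᶜ)ᵀ * colSub A T) t' t|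
        = (∑ t : {x // x ∈ T},
            ((Finset.powersetCard j (t'.1.1 ∩ t.1.1)).card : ℝ)) *
          (1 / Real.sqrt (k.choose j)) ^ 2 := by
    intro t'
    rw [Finset.sum_mul]
    apply Finset.sum_congr rfl
    intro t _
    rw [Stmt7Aux.entry_eq, abs_of_nonneg (by positivity)]
  have hval : ∀ (c : ℕ), c = k.choose j →
      ((c : ℝ)) * (1 / Real.sqrt (k.choose j)) ^ 2 = 1 := by
    intro c hc
    rw [hc, Stmt7Aux.csq j k hjk]
    field_simp
  have hle1 : ∀ t' : {x // x ∈ Tᶜ},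
      ∑ t : {x // x ∈ T}, |((colSub A Tᶜ)ᵀ * colSub A T) t' t| ≤ 1 := by
    intro t'
    rw [key t']
    have hsle : (∑ t : {x // x ∈ T},
        ((Finset.powersetCard j (t'.1.1 ∩ t.1.1)).card : ℝ)) ≤ (k.choose j : ℝ) := by
      have := Stmt7Aux.sum_card_le j k hj hjk t'.1
      exact_mod_cast this
    calc (∑ t : {x // x ∈ T},
        ((Finset.powersetCard j (t'.1.1 ∩ t.1.1)).card : ℝ)) *
          (1 / Real.sqrt (k.choose j)) ^ 2
        ≤ (k.choose j : ℝ) * (1 / Real.sqrt (k.choose j)) ^ 2 := by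
          apply mul_le_mul_of_nonneg_right hsle (by positivity)
      _ = 1 := hval _ rfl
  have hbase : ∑ t : {x // x ∈ T},
      |((colSub A Tᶜ)ᵀ * colSub A T) (⟨Stmt7Aux.basePt j k, hbmem⟩ : {x // x ∈ Tᶜ}) t|
        = 1 := by
    rw [key]
    have hsum := Stmt7Aux.sum_card_base j k hj hjk
    have hsum' : (∑ t : {x // x ∈ T},
        ((Finset.powersetCard j ((Stmt7Aux.basePt j k).1 ∩ t.1.1)).card : ℝ))
        = (k.choose j : ℝ) := by exact_mod_cast hsum
    rw [show ((⟨Stmt7Aux.basePt j k, hbmem⟩ : {x // x ∈ Tᶜ}).1.1)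
        = (Stmt7Aux.basePt j k).1 from rfl]
    rw [hsum']
    exact hval _ rfl
  rw [matInfNorm]
  apply le_antisymm
  · exact ciSup_le hle1
  · have h := le_ciSup (f := fun t' : {x // x ∈ Tᶜ} =>
      ∑ t : {x // x ∈ T}, |((colSub A Tᶜ)ᵀ * colSub A T) t' t|)
      (Set.Finite.bddAbove (Set.finite_range _)) (⟨Stmt7Aux.basePt j k, hbmem⟩ : {x // x ∈ Tᶜ})
    rw [hbase] at h
    exact h
end
end

section
/- For all integers 2 ≤ j < k there exist an integer n ≥ k and a set T of k-element subsets of {1,…,n}, any two distinct members of which intersect in at most j elements, such that for A = R^{j,k} (with this n, and T^c the set of all remaining k-element subsets) the matrix A_T^*A_T is invertible and ‖A_{T^c}^* A_T (A_T^*A_T)^{−1}‖_∞ > 1. -/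
open scoped Classical
open Finset Matrix

noncomputable section

/-!
Take a `k`-set `K` and, for every `j`-subset `σ ⊆ K` and `b ∈ {0, 1}`, the `k`-set `τ(σ, b)`
obtained from `K` by replacing the vertices outside `σ` with fresh ones. Two distinct members of
`T = {τ(σ, b)}` meet in `σ ∩ σ'`, so in at most `j` vertices, and in exactly `j` only for the
partners `τ(σ, 0)`, `τ(σ, 1)`. As `(AᵀA)_{τ τ'} = C(|τ ∩ τ'|, j) / C(k, j)`, the Gram matrix
`G = A_TᵀA_T` is the identity plus `ε = 1 / C(k, j) < 1` at the partner positions: it is strictly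
diagonally dominant, hence invertible, and its absolute row sums are `1 + ε`. The row of
`A_{Tᶜ}ᵀA_T` indexed by `K ∉ T` has all `2 C(k, j)` entries equal to `ε`, so its `ℓ¹`-norm `2` is at
most `1 + ε` times the `ℓ¹`-norm of the same row of `A_{Tᶜ}ᵀA_T G⁻¹`, which therefore exceeds `1`.
-/

section AbsRowSums

variable {m p q : Type*}

theorem sum_abs_mul_apply_le [Fintype p] [Fintype q] (M : Matrix m p ℝ) (G : Matrix p q ℝ)
    {c : ℝ} (hG : ∀ y, ∑ s, |G y s| ≤ c) (i : m) :
    ∑ s, |(M * G) i s| ≤ c * ∑ y, |M i y| := by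
  calc ∑ s, |(M * G) i s| ≤ ∑ s, ∑ y, |M i y| * |G y s| := by
        refine sum_le_sum fun s _ => ?_
        simp only [Matrix.mul_apply, ← abs_mul]
        exact abs_sum_le_sum_abs _ _
    _ = ∑ y, |M i y| * ∑ s, |G y s| := by
        rw [sum_comm]; simp only [mul_sum]
    _ ≤ ∑ y, |M i y| * c := sum_le_sum fun y _ => mul_le_mul_of_nonneg_left (hG y) (abs_nonneg _)
    _ = c * ∑ y, |M i y| := by rw [← sum_mul, mul_comm]

theorem sum_abs_apply_le_matInfNorm [Finite m] [Fintype p] (M : Matrix m p ℝ) (i : m) :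
    ∑ s, |M i s| ≤ matInfNorm M :=
  le_ciSup (f := fun i => ∑ s, |M i s|) (Set.finite_range _).bddAbove i

theorem one_lt_matInfNorm_mul_inv [Finite m] [Fintype p] [DecidableEq p] {G : Matrix p p ℝ}
    (hG : IsUnit G) (B : Matrix m p ℝ) {c : ℝ} (hc : 0 ≤ c) (hGrow : ∀ y, ∑ s, |G y s| ≤ c)
    {i : m} (hBi : c < ∑ s, |B i s|) : 1 < matInfNorm (B * G⁻¹) := by
  have hB : B = B * G⁻¹ * G := by
    rw [Matrix.mul_assoc, Matrix.nonsing_inv_mul _ ((Matrix.isUnit_iff_isUnit_det G).mp hG),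
      Matrix.mul_one]
  have key : c < c * matInfNorm (B * G⁻¹) := by
    calc c < ∑ s, |B i s| := hBi
      _ ≤ c * ∑ y, |(B * G⁻¹) i y| := by
          conv_lhs => rw [hB]
          exact sum_abs_mul_apply_le _ _ hGrow i
      _ ≤ c * matInfNorm (B * G⁻¹) :=
          mul_le_mul_of_nonneg_left (sum_abs_apply_le_matInfNorm _ i) hc
  nlinarith

theorem isUnit_of_sum_abs_offDiag_lt_one [Fintype p] [DecidableEq p] {G : Matrix p p ℝ}
    (hdiag : ∀ y, G y y = 1) (hoff : ∀ y, ∑ s ∈ univ.erase y, |G y s| < 1) : IsUnit G := by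
  refine (Matrix.isUnit_iff_isUnit_det G).mpr (isUnit_iff_ne_zero.mpr ?_)
  refine det_ne_zero_of_sum_row_lt_diag fun y => ?_
  simpa [hdiag] using hoff y

theorem sum_abs_row_le_one_add [Fintype p] [DecidableEq p] {G : Matrix p p ℝ}
    (hdiag : ∀ y, G y y = 1) {ε : ℝ} (hoff : ∀ y, ∑ s ∈ univ.erase y, |G y s| ≤ ε) (y : p) :
    ∑ s, |G y s| ≤ 1 + ε := by
  rw [← add_sum_erase _ _ (mem_univ y), hdiag, abs_one]
  linarith [hoff y]

end AbsRowSums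

theorem colSub_transpose_mul_colSub {m p R : Type*} [Fintype m] [Semiring R]
    (A : Matrix m p R) (S T : Finset p) :
    (colSub A S)ᵀ * colSub A T = (Aᵀ * A).submatrix Subtype.val Subtype.val :=
  rfl

theorem card_filter_subset_eq_choose_s8 {α : Type*} [Fintype α] [DecidableEq α] (j : ℕ)
    (s : Finset α) :
    (univ.filter fun σ : {σ : Finset α // σ.card = j} => σ.1 ⊆ s).card = s.card.choose j := by
  rw [← card_powersetCard]
  refine card_bij (fun σ _ => σ.1) ?_ ?_ ?_
  · intro σ hσ
    exact mem_powersetCard.mpr ⟨(mem_filter.mp hσ).2, σ.2⟩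
  · intro σ _ τ _ h
    exact Subtype.ext h
  · intro σ hσ
    obtain ⟨hs, hc⟩ := mem_powersetCard.mp hσ
    exact ⟨⟨σ, hc⟩, by simpa using hs, rfl⟩

theorem radon_transpose_mul_radon_apply (n j k : ℕ)
    (τ₁ τ₂ : {τ : Finset (Fin n) // τ.card = k}) :
    ((radon n j k)ᵀ * radon n j k) τ₁ τ₂ = ((τ₁.1 ∩ τ₂.1).card.choose j : ℝ) / k.choose j := by
  have hterm : ∀ σ : {σ : Finset (Fin n) // σ.card = j}, radon n j k σ τ₁ * radon n j k σ τ₂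
      = if σ.1 ⊆ τ₁.1 ∩ τ₂.1 then ((k.choose j : ℝ))⁻¹ else 0 := by
    intro σ
    by_cases h₁ : σ.1 ⊆ τ₁.1 <;> by_cases h₂ : σ.1 ⊆ τ₂.1 <;>
      simp [radon, h₁, h₂, subset_inter_iff, ← mul_inv]
  rw [Matrix.mul_apply]
  simp only [Matrix.transpose_apply]
  rw [Fintype.sum_congr _ _ hterm, ← sum_filter, sum_const,
    card_filter_subset_eq_choose_s8, nsmul_eq_mul, div_eq_mul_inv]

theorem colSub_radon_transpose_mul_apply (n j k : ℕ)
    (S T : Finset {τ : Finset (Fin n) // τ.card = k}) (s : {x // x ∈ S}) (t : {x // x ∈ T}) :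
    ((colSub (radon n j k) S)ᵀ * colSub (radon n j k) T) s t
      = ((s.1.1 ∩ t.1.1).card.choose j : ℝ) / k.choose j := by
  rw [colSub_transpose_mul_colSub]
  exact radon_transpose_mul_radon_apply n j k s t

theorem card_inter_lt_of_ne {α : Type*} [DecidableEq α] {σ σ' : Finset α} {j : ℕ}
    (hσ : σ.card = j) (hσ' : σ'.card = j) (h : σ ≠ σ') : (σ ∩ σ').card < j := by
  by_contra! hle
  have h₁ : σ ∩ σ' = σ := eq_of_subset_of_card_le inter_subset_left (by omega)
  have h₂ : σ ∩ σ' = σ' := eq_of_subset_of_card_le inter_subset_right (by omega)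
  exact h (h₁.symm.trans h₂)

theorem two_le_choose {j k : ℕ} (hj : 1 ≤ j) (hjk : j < k) : 2 ≤ k.choose j :=
  calc 2 ≤ (j + 1).choose j := by rw [Nat.choose_succ_self_right]; omega
    _ ≤ k.choose j := Nat.choose_le_choose j hjk

namespace RadonExample

variable {j k : ℕ}

-- `inl i` is the vertex `i` of the core `k`-set; `inr (p, i)` is the fresh copy of `i` used by
-- the clique `clique p`.
abbrev Vertex (k : ℕ) := Fin k ⊕ (Finset (Fin k) × Bool) × Fin k

def clique (p : Finset (Fin k) × Bool) : Finset (Vertex k) :=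
  p.1.disjSum ({p} ×ˢ p.1ᶜ)

def core (k : ℕ) : Finset (Vertex k) :=
  univ.disjSum ∅

theorem card_clique (p : Finset (Fin k) × Bool) : (clique p).card = k := by
  rw [clique, card_disjSum, card_product, card_singleton, one_mul, card_compl, Fintype.card_fin]
  exact Nat.add_sub_cancel' (by simpa using p.1.card_le_univ)

theorem card_core (k : ℕ) : (core k).card = k := by
  simp [core]

theorem clique_inter_clique {p q : Finset (Fin k) × Bool} (h : p ≠ q) :
    clique p ∩ clique q = (p.1 ∩ q.1).disjSum ∅ := by
  ext (x | ⟨r, x⟩)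
  · simp [clique]
  · simp only [clique, inr_mem_disjSum, mem_inter, mem_product, mem_singleton, mem_compl,
      disjSum_empty, mem_map, Function.Embedding.inl_apply, reduceCtorEq, and_false,
      exists_false, iff_false]
    rintro ⟨⟨rfl, -⟩, rfl, -⟩
    exact h rfl

theorem core_inter_clique (p : Finset (Fin k) × Bool) :
    core k ∩ clique p = p.1.disjSum ∅ := by
  ext (x | ⟨r, x⟩) <;> simp [core, clique]

abbrev KSet (k : ℕ) := {τ : Finset (Fin (Fintype.card (Vertex k))) // τ.card = k}

def toKSet (s : Finset (Vertex k)) (hs : s.card = k) : KSet k :=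
  ⟨s.map (Fintype.equivFin (Vertex k)).toEmbedding, by rw [card_map, hs]⟩

theorem card_toKSet_inter {s t : Finset (Vertex k)} (hs : s.card = k) (ht : t.card = k) :
    ((toKSet s hs).1 ∩ (toKSet t ht).1).card = (s ∩ t).card := by
  rw [toKSet, toKSet, ← map_inter, card_map]

def cliqueCol (p : Finset (Fin k) × Bool) : KSet k :=
  toKSet (clique p) (card_clique p)

def coreCol (k : ℕ) : KSet k :=
  toKSet (core k) (card_core k)

theorem card_cliqueCol_inter {p q : Finset (Fin k) × Bool} (h : p ≠ q) :
    ((cliqueCol p).1 ∩ (cliqueCol q).1).card = (p.1 ∩ q.1).card := by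
  rw [cliqueCol, cliqueCol, card_toKSet_inter, clique_inter_clique h, card_disjSum,
    card_empty, add_zero]

theorem card_coreCol_inter (p : Finset (Fin k) × Bool) :
    ((coreCol k).1 ∩ (cliqueCol p).1).card = p.1.card := by
  rw [coreCol, cliqueCol, card_toKSet_inter, core_inter_clique, card_disjSum, card_empty, add_zero]

theorem cliqueCol_injOn : Set.InjOn (cliqueCol (k := k)) {p | p.1.card < k} := by
  intro p hp q _ hpq
  by_contra hne
  have := card_cliqueCol_inter hne
  rw [hpq, inter_self, (cliqueCol q).2] at this
  exact absurd (this ▸ card_le_card inter_subset_left) (not_le.mpr hp)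

theorem coreCol_ne_cliqueCol {p : Finset (Fin k) × Bool} (hp : p.1.card < k) :
    coreCol k ≠ cliqueCol p := by
  intro h
  have := card_coreCol_inter p
  rw [h, inter_self, (cliqueCol p).2] at this
  omega

def cliqueFamily (j k : ℕ) : Finset (KSet k) :=
  (powersetCard j univ ×ˢ univ).image cliqueCol

theorem mem_cliqueFamily {t : KSet k} :
    t ∈ cliqueFamily j k ↔ ∃ p : Finset (Fin k) × Bool, p.1.card = j ∧ cliqueCol p = t := by
  simp [cliqueFamily]

theorem card_cliqueFamily (hjk : j < k) : (cliqueFamily j k).card = 2 * k.choose j := by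
  rw [cliqueFamily, card_image_of_injOn, card_product, card_powersetCard, card_univ,
    Fintype.card_fin, card_univ, Fintype.card_bool, mul_comm]
  refine cliqueCol_injOn.mono fun p hp => ?_
  simp only [coe_product, Set.mem_prod, mem_coe, mem_powersetCard_univ] at hp
  exact hp.1.trans_lt hjk

theorem coreCol_notMem_cliqueFamily (hjk : j < k) : coreCol k ∉ cliqueFamily j k := by
  rw [mem_cliqueFamily]
  rintro ⟨p, hp, h⟩
  exact coreCol_ne_cliqueCol (hp.trans_lt hjk) h.symm

theorem card_inter_le_of_mem_cliqueFamily {t s : KSet k} (ht : t ∈ cliqueFamily j k)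
    (hs : s ∈ cliqueFamily j k) (hts : t ≠ s) : (t.1 ∩ s.1).card ≤ j := by
  obtain ⟨p, hp, rfl⟩ := mem_cliqueFamily.mp ht
  obtain ⟨q, -, rfl⟩ := mem_cliqueFamily.mp hs
  rw [card_cliqueCol_inter (ne_of_apply_ne _ hts), ← hp]
  exact card_le_card inter_subset_left

abbrev radonCols (j k : ℕ) (T : Finset (KSet k)) :
    Matrix {σ : Finset (Fin (Fintype.card (Vertex k))) // σ.card = j} {x // x ∈ T} ℝ :=
  colSub (radon (Fintype.card (Vertex k)) j k) T

abbrev cliqueGram (j k : ℕ) :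
    Matrix {x // x ∈ cliqueFamily j k} {x // x ∈ cliqueFamily j k} ℝ :=
  (radonCols j k (cliqueFamily j k))ᵀ * radonCols j k (cliqueFamily j k)

theorem cliqueGram_apply (y s : {x // x ∈ cliqueFamily j k}) :
    cliqueGram j k y s = ((y.1.1 ∩ s.1.1).card.choose j : ℝ) / k.choose j :=
  colSub_radon_transpose_mul_apply _ j k _ _ y s

theorem cliqueGram_apply_self (hjk : j ≤ k) (y : {x // x ∈ cliqueFamily j k}) :
    cliqueGram j k y y = 1 := by
  rw [cliqueGram_apply, inter_self, y.1.2]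
  exact div_self (Nat.cast_ne_zero.mpr (Nat.choose_pos hjk).ne')

theorem sum_abs_cliqueGram_erase_le (hjk : j < k) (y : {x // x ∈ cliqueFamily j k}) :
    ∑ s ∈ univ.erase y, |cliqueGram j k y s| ≤ (k.choose j : ℝ)⁻¹ := by
  obtain ⟨p, hp, hpy⟩ := mem_cliqueFamily.mp y.2
  have hp' : (p.1, !p.2) ≠ p := fun h => by simpa using congrArg Prod.snd h
  let y' : {x // x ∈ cliqueFamily j k} :=
    ⟨cliqueCol (p.1, !p.2), mem_cliqueFamily.mpr ⟨(p.1, !p.2), hp, rfl⟩⟩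
  have hy' : y' ∈ univ.erase y := by
    refine mem_erase.mpr ⟨fun h => hp' ?_, mem_univ _⟩
    refine cliqueCol_injOn (by simpa [hp] using hjk) (by simpa [hp] using hjk) ?_
    rw [hpy]; exact congrArg Subtype.val h
  -- Every other member of the family meets `y` in fewer than `j` vertices.
  rw [sum_eq_single_of_mem y' hy']
  · rw [cliqueGram_apply, ← hpy, card_cliqueCol_inter hp'.symm, inter_self, hp,
      Nat.choose_self, Nat.cast_one, one_div, abs_of_nonneg (by positivity)]
  · intro s hs hsy'
    obtain ⟨q, hq, hqs⟩ := mem_cliqueFamily.mp s.2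
    have hqp : q ≠ p := by
      rintro rfl
      exact (mem_erase.mp hs).1 (Subtype.ext (hqs.symm.trans hpy))
    have hq₁ : q.1 ≠ p.1 := by
      intro h
      rcases Bool.eq_or_eq_not q.2 p.2 with h₂ | h₂
      · exact hqp (Prod.ext h h₂)
      · exact hsy' (Subtype.ext (by simp [y', ← hqs, ← h, ← h₂]))
    rw [cliqueGram_apply, ← hpy, ← hqs, card_cliqueCol_inter hqp.symm,
      Nat.choose_eq_zero_of_lt (card_inter_lt_of_ne hp hq hq₁.symm)]
    simp

theorem sum_abs_coreCol_row (hjk : j < k) :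
    ∑ s, |((radonCols j k (cliqueFamily j k)ᶜ)ᵀ * radonCols j k (cliqueFamily j k))
        ⟨coreCol k, mem_compl.mpr (coreCol_notMem_cliqueFamily hjk)⟩ s| = 2 := by
  have hentry : ∀ s : {x // x ∈ cliqueFamily j k},
      |((radonCols j k (cliqueFamily j k)ᶜ)ᵀ * radonCols j k (cliqueFamily j k))
        ⟨coreCol k, mem_compl.mpr (coreCol_notMem_cliqueFamily hjk)⟩ s| = (k.choose j : ℝ)⁻¹ := by
    intro s
    obtain ⟨p, hp, hps⟩ := mem_cliqueFamily.mp s.2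
    rw [colSub_radon_transpose_mul_apply, ← hps, card_coreCol_inter, hp, Nat.choose_self,
      Nat.cast_one, one_div, abs_of_nonneg (by positivity)]
  rw [Fintype.sum_congr _ _ hentry, sum_const, card_univ, Fintype.card_coe,
    card_cliqueFamily hjk, nsmul_eq_mul, Nat.cast_mul, Nat.cast_two, mul_assoc,
    mul_inv_cancel₀ (Nat.cast_ne_zero.mpr (Nat.choose_pos hjk.le).ne'), mul_one]

end RadonExample

open RadonExample in
/-- for all `2 ≤ j < k` there exist `n ≥ k` and a set `T` of `k`-cliques,
pairwise overlapping in at most `j` nodes, such that `A_T^*A_T` is invertible and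
`‖A_{T^c}^* A_T (A_T^*A_T)⁻¹‖_∞ > 1`. -/
theorem stmt8 (j k : ℕ) (hj : 2 ≤ j) (hjk : j < k) :
    ∃ n, k ≤ n ∧ ∃ T : Finset {τ : Finset (Fin n) // τ.card = k},
      (∀ σ₁ ∈ T, ∀ σ₂ ∈ T, σ₁ ≠ σ₂ → (σ₁.1 ∩ σ₂.1).card ≤ j) ∧
      IsUnit ((colSub (radon n j k) T)ᵀ * colSub (radon n j k) T) ∧
      1 < matInfNorm ((colSub (radon n j k) Tᶜ)ᵀ * colSub (radon n j k) T *
        (((colSub (radon n j k) T)ᵀ * colSub (radon n j k) T)⁻¹)) := by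
  have hε : (k.choose j : ℝ)⁻¹ < 1 :=
    inv_lt_one_of_one_lt₀ (by exact_mod_cast two_le_choose (by omega) hjk)
  have hunit := isUnit_of_sum_abs_offDiag_lt_one (cliqueGram_apply_self hjk.le)
    fun y => (sum_abs_cliqueGram_erase_le hjk y).trans_lt hε
  refine ⟨Fintype.card (Vertex k), by simp, cliqueFamily j k,
    fun _ h₁ _ h₂ => card_inter_le_of_mem_cliqueFamily h₁ h₂, hunit, ?_⟩
  refine one_lt_matInfNorm_mul_inv hunit _ (by positivity)
    (sum_abs_row_le_one_add (cliqueGram_apply_self hjk.le) (sum_abs_cliqueGram_erase_le hjk))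
    (i := ⟨coreCol k, mem_compl.mpr (coreCol_notMem_cliqueFamily hjk)⟩) ?_
  rw [sum_abs_coreCol_row hjk]
  linarith
end
end

section
/- Let 2 ≤ j ≤ k and let τ, σ₁, …, σ_m be k-element subsets of {1,…,n} with the σ_i pairwise distinct. If |σ_i ∩ σ_l| ≤ j−1 for all i ≠ l, then ∑_{i=1}^m C(|τ ∩ σ_i|, j) ≤ C(k, j). If moreover |σ_i ∩ σ_l| ≤ j−2 for all i ≠ l and τ ∉ {σ₁,…,σ_m}, then the inequality is strict: ∑_{i=1}^m C(|τ ∩ σ_i|, j) < C(k, j). -/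
open scoped Classical
open Finset Matrix

noncomputable section

/-- let `τ, σ₁, …, σ_m` be `k`-element subsets of `{1,…,n}` with the `σ_i`
pairwise distinct. If pairwise overlaps of the `σ_i` are at most `j-1`, then
`∑ᵢ C(|τ ∩ σᵢ|, j) ≤ C(k,j)`; and if moreover the overlaps are at most `j-2` and `τ` is
none of the `σᵢ`, the inequality is strict. -/
theorem stmt9 (n j k m : ℕ) (hj : 2 ≤ j) (hjk : j ≤ k)
    (τ : Finset (Fin n)) (hτ : τ.card = k)
    (σ : Fin m → Finset (Fin n)) (hσ : ∀ i, (σ i).card = k)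
    (hinj : Function.Injective σ)
    (h1 : ∀ i l, i ≠ l → ((σ i) ∩ (σ l)).card ≤ j - 1) :
    (∑ i, ((τ ∩ σ i).card).choose j ≤ k.choose j) ∧
    ((∀ i l, i ≠ l → ((σ i) ∩ (σ l)).card ≤ j - 2) → (∀ i, τ ≠ σ i) →
      ∑ i, ((τ ∩ σ i).card).choose j < k.choose j) := by
  classical
  set F : Fin m → Finset (Finset (Fin n)) := fun i => (τ ∩ σ i).powersetCard j with hF
  have hFsub : ∀ i, F i ⊆ τ.powersetCard j := by
    intro i S hS
    rw [Finset.mem_powersetCard] at hS ⊢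
    exact ⟨hS.1.trans Finset.inter_subset_left, hS.2⟩
  have hdisj : ∀ i ∈ (Finset.univ : Finset (Fin m)), ∀ l ∈ Finset.univ,
      i ≠ l → Disjoint (F i) (F l) := by
    intro i _ l _ hil
    rw [Finset.disjoint_left]
    intro S hSi hSl
    rw [Finset.mem_powersetCard] at hSi hSl
    have hsub : S ⊆ σ i ∩ σ l :=
      Finset.subset_inter (hSi.1.trans Finset.inter_subset_right)
        (hSl.1.trans Finset.inter_subset_right)
    have h3 := (Finset.card_le_card hsub).trans (h1 i l hil)
    have h4 := hSi.2
    omega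
  have hsum : ∑ i, ((τ ∩ σ i).card).choose j = (Finset.univ.biUnion F).card := by
    rw [Finset.card_biUnion hdisj]
    refine Finset.sum_congr rfl fun i _ => ?_
    simp [hF, Finset.card_powersetCard]
  have hbsub : Finset.univ.biUnion F ⊆ τ.powersetCard j := by
    intro S hS
    rw [Finset.mem_biUnion] at hS
    obtain ⟨i, _, hi⟩ := hS
    exact hFsub i hi
  have hpcard : (τ.powersetCard j).card = k.choose j := by
    rw [Finset.card_powersetCard, hτ]
  constructor
  · rw [hsum, ← hpcard]
    exact Finset.card_le_card hbsub
  · intro h2 hτne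
    -- find an uncovered j-subset of τ
    have huncov : ∃ S ∈ τ.powersetCard j, ∀ i, ¬ S ⊆ σ i := by
      by_contra hcon
      push_neg at hcon
      -- totality: every j-subset of τ is in some σ i
      have htot : ∀ S : Finset (Fin n), S ⊆ τ → S.card = j → ∃ i, S ⊆ σ i := by
        intro S h1' h2'
        exact hcon S (Finset.mem_powersetCard.mpr ⟨h1', h2'⟩)
      have key : ∀ d (S S' : Finset (Fin n)), S ⊆ τ → S.card = j → S' ⊆ τ →
          S'.card = j → (S \ S').card ≤ d → ∀ i, S ⊆ σ i → S' ⊆ σ i := by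
        intro d
        induction d with
        | zero =>
          intro S S' _ hScard _ hS'card hd i hSi
          have hss : S ⊆ S' := by
            rw [← Finset.sdiff_eq_empty_iff_subset, ← Finset.card_eq_zero]
            omega
          have : S = S' := Finset.eq_of_subset_of_card_le hss (by omega)
          rwa [← this]
        | succ d ih =>
          intro S S' hSτ hScard hS'τ hS'card hd i hSi
          by_cases hSS' : S = S'
          · rwa [← hSS']
          · have hne1 : (S \ S').Nonempty := by
              rw [Finset.sdiff_nonempty]
              intro hss
              exact hSS' (Finset.eq_of_subset_of_card_le hss (by omega))
            have hne2 : (S' \ S).Nonempty := by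
              rw [Finset.sdiff_nonempty]
              intro hss
              exact hSS' (Finset.eq_of_subset_of_card_le hss (by omega)).symm
            obtain ⟨x, hx⟩ := hne1
            obtain ⟨y, hy⟩ := hne2
            rw [Finset.mem_sdiff] at hx hy
            set S'' : Finset (Fin n) := insert y (S.erase x) with hS''
            have hynotin : y ∉ S.erase x := fun h => hy.2 (Finset.mem_of_mem_erase h)
            have hS''card : S''.card = j := by
              rw [hS'', Finset.card_insert_of_notMem hynotin,
                Finset.card_erase_of_mem hx.1]
              omega
            have hS''τ : S'' ⊆ τ := by
              rw [hS'']
              intro z hz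
              rcases Finset.mem_insert.mp hz with h | h
              · exact h ▸ hS'τ hy.1
              · exact hSτ (Finset.mem_of_mem_erase h)
            obtain ⟨i', hi'⟩ := htot S'' hS''τ hS''card
            have hii' : i' = i := by
              by_contra hne
              have hesub : S.erase x ⊆ σ i ∩ σ i' := by
                refine Finset.subset_inter ?_ ?_
                · exact (Finset.erase_subset x S).trans hSi
                · exact (Finset.subset_insert y _).trans hi'
              have := (Finset.card_le_card hesub).trans (h2 i i' (Ne.symm hne))
              rw [Finset.card_erase_of_mem hx.1] at this
              omega
            rw [hii'] at hi'
            have hstep : (S'' \ S').card ≤ d := by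
              have hsub2 : S'' \ S' ⊆ (S \ S').erase x := by
                intro z hz
                rw [Finset.mem_sdiff, hS''] at hz
                rcases Finset.mem_insert.mp hz.1 with h | h
                · exact absurd (h ▸ hy.1) hz.2
                · rw [Finset.mem_erase] at h ⊢
                  exact ⟨h.1, Finset.mem_sdiff.mpr ⟨h.2, hz.2⟩⟩
              have hc := Finset.card_le_card hsub2
              rw [Finset.card_erase_of_mem (Finset.mem_sdiff.mpr hx)] at hc
              have : 1 ≤ (S \ S').card := Finset.card_pos.mpr ⟨x, Finset.mem_sdiff.mpr hx⟩
              omega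
            exact ih S'' S' hS''τ hS''card hS'τ hS'card hstep i hi'
      -- get a starting j-subset
      obtain ⟨S₀, hS₀τ, hS₀card⟩ := Finset.exists_subset_card_eq (hτ ▸ hjk : j ≤ τ.card)
      obtain ⟨i₀, hi₀⟩ := htot S₀ hS₀τ hS₀card
      have hτsub : τ ⊆ σ i₀ := by
        intro z hz
        obtain ⟨S, hzS, hSτ, hScard⟩ :=
          Finset.exists_subsuperset_card_eq (t := τ) (n := j) (Finset.singleton_subset_iff.mpr hz)
            (by rw [Finset.card_singleton]; omega) (by rw [hτ]; exact hjk)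
        have := key (S₀ \ S).card S₀ S hS₀τ hS₀card hSτ hScard le_rfl i₀ hi₀
        exact this (hzS (Finset.mem_singleton_self z))
      exact hτne i₀ (Finset.eq_of_subset_of_card_le hτsub (by rw [hσ, hτ]))
    obtain ⟨S, hSmem, hSnot⟩ := huncov
    have hssub : Finset.univ.biUnion F ⊂ τ.powersetCard j := by
      refine Finset.ssubset_iff_of_subset hbsub |>.mpr ⟨S, hSmem, ?_⟩
      rw [Finset.mem_biUnion]
      rintro ⟨i, _, hi⟩
      rw [Finset.mem_powersetCard] at hi
      exact hSnot i (hi.1.trans Finset.inter_subset_right)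
    rw [hsum, ← hpcard]
    exact Finset.card_lt_card hssub
end
end

section
/- Let A be a real M×N matrix, x₀ ∈ ℝ^N with support T = supp(x₀) of cardinality s ≥ 1, and suppose A_T^*A_T is invertible and ‖A_{T^c}^* A_T (A_T^*A_T)^{−1}‖_∞ ≤ α with α·s < 1. Let z ∈ ℝ^M with ‖z‖_∞ ≤ ε, let b = A x₀ + z, and let δ ≥ ε. Then every solution x̂ of the problem: minimize ‖x‖₁ subject to ‖Ax − b‖_∞ ≤ δ, satisfies ‖x̂ − x₀‖₁ ≤ (2s(ε + δ)/(1 − αs)) · ‖A_T (A_T^*A_T)^{−1}‖₁. -/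
open scoped Classical
open Finset Matrix

noncomputable section

section helpers

lemma vecInfNorm_nonneg' {m : Type*} (u : m → ℝ) : 0 ≤ vecInfNorm u :=
  Real.iSup_nonneg fun _ => abs_nonneg _

lemma abs_le_vecInfNorm {m : Type*} [Fintype m] (u : m → ℝ) (i : m) :
    |u i| ≤ vecInfNorm u := by
  unfold vecInfNorm
  exact le_ciSup (Set.Finite.bddAbove (Set.finite_range fun i => |u i|)) i

lemma colsum_le_matOneNorm {m p : Type*} [Fintype m] [Fintype p] (M : Matrix m p ℝ)
    (j : p) : ∑ i, |M i j| ≤ matOneNorm M := by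
  unfold matOneNorm
  exact le_ciSup (Set.Finite.bddAbove (Set.finite_range fun j => ∑ i, |M i j|)) j

lemma rowsum_le_matInfNorm {m p : Type*} [Fintype m] [Fintype p] (M : Matrix m p ℝ)
    (i : m) : ∑ j, |M i j| ≤ matInfNorm M := by
  unfold matInfNorm
  exact le_ciSup (Set.Finite.bddAbove (Set.finite_range fun i => ∑ j, |M i j|)) i

lemma matOneNorm_nonneg' {m p : Type*} [Fintype m] [Fintype p] [Nonempty p] (M : Matrix m p ℝ) :
    0 ≤ matOneNorm M := by
  obtain ⟨j⟩ := ‹Nonempty p›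
  exact le_trans (Finset.sum_nonneg fun i _ => abs_nonneg _) (colsum_le_matOneNorm M j)

end helpers

set_option maxHeartbeats 1000000 in
/-- stable recovery: if `T = supp(x₀)` has cardinality `s ≥ 1`,
`A_T^*A_T` is invertible, the IRR quantity is at most `α` with `αs < 1`, `‖z‖_∞ ≤ ε`,
`b = Ax₀ + z` and `δ ≥ ε`, then every solution `xhat` of `min ‖x‖₁ s.t. ‖Ax−b‖_∞ ≤ δ`
satisfies `‖xhat − x₀‖₁ ≤ (2s(ε+δ)/(1−αs))·‖A_T(A_T^*A_T)⁻¹‖₁`. -/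
theorem stmt15 (M N : ℕ) (A : Matrix (Fin M) (Fin N) ℝ) (x₀ : Fin N → ℝ)
    (T : Finset (Fin N)) (hT : T = Finset.univ.filter (fun q => x₀ q ≠ 0))
    (s : ℕ) (hs : T.card = s) (hs1 : 1 ≤ s)
    (hInv : IsUnit ((colSub A T)ᵀ * colSub A T))
    (α : ℝ)
    (hα : matInfNorm ((colSub A Tᶜ)ᵀ * colSub A T * (((colSub A T)ᵀ * colSub A T)⁻¹)) ≤ α)
    (hαs : α * (s : ℝ) < 1)
    (z : Fin M → ℝ) (ε : ℝ) (hz : vecInfNorm z ≤ ε)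
    (b : Fin M → ℝ) (hb : b = A.mulVec x₀ + z)
    (δ : ℝ) (hδ : ε ≤ δ)
    (xhat : Fin N → ℝ)
    (hfeas : vecInfNorm (A.mulVec xhat - b) ≤ δ)
    (hopt : ∀ y : Fin N → ℝ, vecInfNorm (A.mulVec y - b) ≤ δ →
      vecOneNorm xhat ≤ vecOneNorm y) :
    vecOneNorm (xhat - x₀) ≤ 2 * (s : ℝ) * (ε + δ) / (1 - α * (s : ℝ)) *
      matOneNorm (colSub A T * (((colSub A T)ᵀ * colSub A T)⁻¹)) := by
  classical
  have hdet : IsUnit ((colSub A T)ᵀ * colSub A T).det :=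
    (Matrix.isUnit_iff_isUnit_det _).mp hInv
  set B := colSub A T with hBdef
  set C := colSub A Tᶜ with hCdef
  set G := Bᵀ * B with hGdef
  set P := B * G⁻¹ with hPdef
  set K := Cᵀ * B * G⁻¹ with hKdef
  set h : Fin N → ℝ := xhat - x₀ with hhdef
  have hGinv : G⁻¹ * G = 1 := Matrix.nonsing_inv_mul G hdet
  have hGsymm : Gᵀ = G := by
    rw [hGdef, Matrix.transpose_mul, Matrix.transpose_transpose]
  have hGinvsymm : (G⁻¹)ᵀ = G⁻¹ := by
    rw [Matrix.transpose_nonsing_inv, hGsymm]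
  -- basic nonnegativity facts
  have hε0 : (0:ℝ) ≤ ε := le_trans (vecInfNorm_nonneg' z) hz
  have hδ0 : (0:ℝ) ≤ δ := le_trans hε0 hδ
  have hεδ0 : (0:ℝ) ≤ ε + δ := by linarith
  have hP0 : 0 ≤ matOneNorm P := by
    have : Nonempty {x // x ∈ T} := by
      rw [Finset.nonempty_coe_sort]
      exact Finset.card_pos.mp (by omega)
    exact matOneNorm_nonneg' P
  have h1αs : (0:ℝ) < 1 - α * (s:ℝ) := by linarith
  -- vectors restricted to T and Tᶜ
  set u : {x // x ∈ T} → ℝ := fun q => h q.1 with hudef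
  set v : {x // x ∈ Tᶜ} → ℝ := fun p => h p.1 with hvdef
  -- bound on ‖Ah‖∞
  have hw : ∀ i, |A.mulVec h i| ≤ ε + δ := by
    intro i
    have h1 : A.mulVec h i = (A.mulVec xhat - b) i + z i := by
      rw [hhdef, Matrix.mulVec_sub, hb]
      simp [Pi.sub_apply]
      ring
    rw [h1]
    calc |(A.mulVec xhat - b) i + z i| ≤ |(A.mulVec xhat - b) i| + |z i| := abs_add_le _ _
      _ ≤ δ + ε := add_le_add (le_trans (abs_le_vecInfNorm _ i) hfeas)
          (le_trans (abs_le_vecInfNorm z i) hz)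
      _ = ε + δ := by ring
  -- x₀ vanishes off T
  have hx0zero : ∀ q, q ∉ T → x₀ q = 0 := by
    intro q hq
    by_contra hne
    exact hq (hT ▸ Finset.mem_filter.mpr ⟨Finset.mem_univ q, hne⟩)
  -- the cone condition : SC ≤ ST
  set ST : ℝ := ∑ q ∈ T, |h q| with hSTdef
  set SC : ℝ := ∑ q ∈ Tᶜ, |h q| with hSCdef
  have hST0 : 0 ≤ ST := Finset.sum_nonneg fun _ _ => abs_nonneg _
  have hcone : SC ≤ ST := by
    have hx0feas : vecInfNorm (A.mulVec x₀ - b) ≤ δ := by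
      have he : A.mulVec x₀ - b = -z := by rw [hb]; abel
      rw [he]
      have : vecInfNorm (-z) = vecInfNorm z := by
        unfold vecInfNorm; simp
      rw [this]; exact le_trans hz hδ
    have hle := hopt x₀ hx0feas
    have e0 : vecOneNorm x₀ = ∑ q ∈ T, |x₀ q| := by
      rw [vecOneNorm, ← Finset.sum_add_sum_compl T fun q => |x₀ q|]
      have : ∑ q ∈ Tᶜ, |x₀ q| = 0 := Finset.sum_eq_zero fun q hq => by
        rw [hx0zero q (Finset.mem_compl.mp hq), abs_zero]
      rw [this, add_zero]
    have e1 : vecOneNorm xhat = ∑ q ∈ T, |x₀ q + h q| + SC := by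
      rw [vecOneNorm, ← Finset.sum_add_sum_compl T fun q => |xhat q|]
      congr 1
      · exact Finset.sum_congr rfl fun q _ => by
          rw [hhdef]; simp [Pi.sub_apply]
      · exact Finset.sum_congr rfl fun q hq => by
          rw [hhdef]; simp [Pi.sub_apply, hx0zero q (Finset.mem_compl.mp hq)]
    have e2 : ∑ q ∈ T, |x₀ q| - ST ≤ ∑ q ∈ T, |x₀ q + h q| := by
      rw [hSTdef, ← Finset.sum_sub_distrib]
      refine Finset.sum_le_sum fun q _ => ?_
      have h3 : |x₀ q| ≤ |x₀ q + h q| + |h q| := by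
        calc |x₀ q| = |(x₀ q + h q) + (-(h q))| := by ring_nf
          _ ≤ |x₀ q + h q| + |(-(h q))| := abs_add_le _ _
          _ = |x₀ q + h q| + |h q| := by rw [abs_neg]
      linarith
    rw [e1, e0] at hle
    linarith
  -- relate finset sums to subtype sums
  have hSTsub : ST = ∑ q : {x // x ∈ T}, |u q| := by
    rw [hSTdef]
    exact Finset.sum_subtype T (fun x => Iff.rfl) fun q => |h q|
  have hSCsub : SC = ∑ p : {x // x ∈ Tᶜ}, |v p| := by
    rw [hSCdef]
    exact Finset.sum_subtype Tᶜ (fun x => Iff.rfl) fun q => |h q|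
  -- split A h
  have hsplit : A.mulVec h = B.mulVec u + C.mulVec v := by
    funext i
    simp only [Matrix.mulVec, dotProduct, Pi.add_apply]
    rw [← Finset.sum_add_sum_compl T fun q => A i q * h q]
    congr 1
    · exact Finset.sum_subtype T (fun x => Iff.rfl) fun q => A i q * h q
    · exact Finset.sum_subtype Tᶜ (fun x => Iff.rfl) fun q => A i q * h q
  -- key identity for u
  have hkey : u = (G⁻¹ * Bᵀ).mulVec (A.mulVec h) - (G⁻¹ * Bᵀ * C).mulVec v := by
    have h2 : (G⁻¹ * Bᵀ).mulVec (A.mulVec h)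
        = u + (G⁻¹ * Bᵀ * C).mulVec v := by
      rw [hsplit, Matrix.mulVec_add]
      congr 1
      · rw [Matrix.mulVec_mulVec, Matrix.mul_assoc, ← hGdef, hGinv, Matrix.one_mulVec]
      · rw [Matrix.mulVec_mulVec]
    rw [h2]; abel
  -- transposed forms
  have hPT : G⁻¹ * Bᵀ = Pᵀ := by
    rw [hPdef, Matrix.transpose_mul, hGinvsymm]
  have hKT : G⁻¹ * Bᵀ * C = Kᵀ := by
    rw [hKdef, Matrix.transpose_mul, Matrix.transpose_mul, Matrix.transpose_transpose,
      hGinvsymm, Matrix.mul_assoc]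
  -- entrywise bound on u
  have hqbound : ∀ q : {x // x ∈ T},
      |u q| ≤ (ε + δ) * matOneNorm P + α * SC := by
    intro q
    have he : u q = ∑ i, P i q * A.mulVec h i - ∑ p : {x // x ∈ Tᶜ}, K p q * v p := by
      conv_lhs => rw [hkey]
      rw [hKT, hPT]
      simp only [Pi.sub_apply, Matrix.mulVec, dotProduct, Matrix.transpose_apply]
    rw [he]
    have hKentry : ∀ p : {x // x ∈ Tᶜ}, |K p q| ≤ α := by
      intro p
      calc |K p q| ≤ ∑ q' : {x // x ∈ T}, |K p q'| :=
            Finset.single_le_sum (f := fun q' => |K p q'|)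
              (fun q' _ => abs_nonneg _) (Finset.mem_univ q)
        _ ≤ matInfNorm K := rowsum_le_matInfNorm K p
        _ ≤ α := hα
    calc |∑ i, P i q * A.mulVec h i - ∑ p : {x // x ∈ Tᶜ}, K p q * v p|
        ≤ |∑ i, P i q * A.mulVec h i| + |∑ p : {x // x ∈ Tᶜ}, K p q * v p| :=
          abs_sub _ _
      _ ≤ (∑ i, |P i q| * (ε + δ)) + ∑ p : {x // x ∈ Tᶜ}, α * |v p| := by
          refine add_le_add ?_ ?_
          · refine le_trans (Finset.abs_sum_le_sum_abs _ _) (Finset.sum_le_sum fun i _ => ?_)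
            rw [abs_mul]
            exact mul_le_mul_of_nonneg_left (hw i) (abs_nonneg _)
          · refine le_trans (Finset.abs_sum_le_sum_abs _ _) (Finset.sum_le_sum fun p _ => ?_)
            rw [abs_mul]
            exact mul_le_mul_of_nonneg_right (hKentry p) (abs_nonneg _)
      _ = (∑ i, |P i q|) * (ε + δ) + α * ∑ p : {x // x ∈ Tᶜ}, |v p| := by
          rw [← Finset.sum_mul, ← Finset.mul_sum]
      _ ≤ (ε + δ) * matOneNorm P + α * SC := by
          rw [hSCsub]
          refine add_le_add ?_ le_rfl
          rw [mul_comm]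
          exact mul_le_mul_of_nonneg_left (colsum_le_matOneNorm P q) hεδ0
  -- sum over T
  have hSTbound : ST ≤ (s:ℝ) * ((ε + δ) * matOneNorm P + α * SC) := by
    rw [hSTsub]
    calc ∑ q : {x // x ∈ T}, |u q|
        ≤ ∑ _q : {x // x ∈ T}, ((ε + δ) * matOneNorm P + α * SC) :=
          Finset.sum_le_sum fun q _ => hqbound q
      _ = (s:ℝ) * ((ε + δ) * matOneNorm P + α * SC) := by
          rw [Finset.sum_const, Finset.card_univ, Fintype.card_coe, hs, nsmul_eq_mul]
  -- finish
  have hsum : vecOneNorm (xhat - x₀) = ST + SC := by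
    rw [vecOneNorm, ← Finset.sum_add_sum_compl T fun q => |(xhat - x₀) q|, hSTdef, hSCdef,
      hhdef]
  have hα0 : (0:ℝ) ≤ α := le_trans (Real.iSup_nonneg fun i =>
    Finset.sum_nonneg fun j _ => abs_nonneg _) hα
  have hSC0 : 0 ≤ SC := Finset.sum_nonneg fun _ _ => abs_nonneg _
  have hST2 : ST * (1 - α * (s:ℝ)) ≤ (s:ℝ) * (ε + δ) * matOneNorm P := by
    nlinarith [hSTbound, mul_nonneg (mul_nonneg hα0 (Nat.cast_nonneg s))
      (sub_nonneg.mpr hcone)]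
  rw [hsum, div_mul_eq_mul_div, le_div_iff₀ h1αs]
  nlinarith [hST2, mul_le_mul_of_nonneg_right hcone (le_of_lt h1αs)]
end
end

section
/- Let A be a real M×N matrix and T a set of column indices of cardinality s ≥ 1 with A_T^*A_T invertible, and set α = ‖A_{T^c}^* A_T (A_T^*A_T)^{−1}‖_∞. Let h ∈ ℝ^N, write h_T and h_{T^c} for the restrictions of h to T and T^c, and suppose ‖h_{T^c}‖₁ ≤ ‖h_T‖₁. Then |⟨A h, A_T (A_T^*A_T)^{−1} h_T⟩| ≥ (1/s − α)·‖h_T‖₁². -/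
open scoped Classical
open Finset Matrix

noncomputable section

/-- key inequality in the stable recovery proof. With
`α = ‖A_{T^c}^* A_T (A_T^*A_T)⁻¹‖_∞`, `|T| = s ≥ 1`, and `‖h_{T^c}‖₁ ≤ ‖h_T‖₁`, one has
`|⟨Ah, A_T(A_T^*A_T)⁻¹ h_T⟩| ≥ (1/s − α)·‖h_T‖₁²`. -/
theorem stmt16 (M N : ℕ) (A : Matrix (Fin M) (Fin N) ℝ)
    (T : Finset (Fin N)) (s : ℕ) (hs : T.card = s) (hs1 : 1 ≤ s)
    (hInv : IsUnit ((colSub A T)ᵀ * colSub A T))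
    (α : ℝ)
    (hα : α = matInfNorm ((colSub A Tᶜ)ᵀ * colSub A T *
      (((colSub A T)ᵀ * colSub A T)⁻¹)))
    (h : Fin N → ℝ)
    (hh : vecOneNorm (fun t : {x // x ∈ Tᶜ} => h t.1) ≤
      vecOneNorm (fun t : {x // x ∈ T} => h t.1)) :
    (1 / (s : ℝ) - α) * (vecOneNorm (fun t : {x // x ∈ T} => h t.1)) ^ 2 ≤
      |∑ i, A.mulVec h i * (colSub A T).mulVec
        ((((colSub A T)ᵀ * colSub A T)⁻¹).mulVec (fun t => h t.1)) i| := by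
  classical
  have hdet : IsUnit ((colSub A T)ᵀ * colSub A T).det :=
    (Matrix.isUnit_iff_isUnit_det _).mp hInv
  set B := colSub A T with hBdef
  set Bc := colSub A Tᶜ with hBcdef
  set G := Bᵀ * B with hGdef
  set hT : {x // x ∈ T} → ℝ := fun t => h t.1 with hhT
  set hTc : {x // x ∈ Tᶜ} → ℝ := fun t => h t.1 with hhTc
  set C := Bcᵀ * B * G⁻¹ with hCdef
  set v := G⁻¹.mulVec hT with hvdef
  set w := B.mulVec v with hwdef
  have hGG : G * G⁻¹ = 1 := Matrix.mul_nonsing_inv _ hdet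
  have hw1 : Bᵀ.mulVec w = hT := by
    rw [hwdef, hvdef, Matrix.mulVec_mulVec, Matrix.mulVec_mulVec, ← hGdef, hGG,
      Matrix.one_mulVec]
  have hw2 : Bcᵀ.mulVec w = C.mulVec hT := by
    rw [hwdef, hvdef, Matrix.mulVec_mulVec, Matrix.mulVec_mulVec, ← hCdef]
  have e1 : ∑ i, A.mulVec h i * w i = ∑ j, h j * ∑ i, A i j * w i := by
    simp only [Matrix.mulVec, dotProduct, Finset.sum_mul]
    rw [Finset.sum_comm]
    refine Finset.sum_congr rfl fun j _ => ?_
    rw [Finset.mul_sum]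
    exact Finset.sum_congr rfl fun i _ => by ring
  have e3 : ∑ j ∈ T, h j * ∑ i, A i j * w i = ∑ t, hT t * hT t := by
    rw [← Finset.sum_coe_sort T]
    refine Finset.sum_congr rfl fun t _ => ?_
    have : ∑ i, A i t.1 * w i = Bᵀ.mulVec w t := by
      simp [Matrix.mulVec, dotProduct, Matrix.transpose_apply, hBdef, colSub]
    rw [this, hw1]
  have e4 : ∑ j ∈ Tᶜ, h j * ∑ i, A i j * w i = ∑ τ, hTc τ * C.mulVec hT τ := by
    rw [← Finset.sum_coe_sort Tᶜ]
    refine Finset.sum_congr rfl fun τ _ => ?_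
    have : ∑ i, A i τ.1 * w i = Bcᵀ.mulVec w τ := by
      simp [Matrix.mulVec, dotProduct, Matrix.transpose_apply, hBcdef, colSub]
    rw [this, hw2]
  have key : ∑ i, A.mulVec h i * w i
      = (∑ t, hT t * hT t) + ∑ τ, hTc τ * C.mulVec hT τ := by
    rw [e1, ← Finset.sum_add_sum_compl T, e3, e4]
  set L1 := vecOneNorm hT with hL1def
  have hL1sum : L1 = ∑ t, |hT t| := rfl
  have hL1 : 0 ≤ L1 := by rw [hL1sum]; exact Finset.sum_nonneg fun _ _ => abs_nonneg _
  have hrow : ∀ τ, ∑ t, |C τ t| ≤ α := by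
    intro τ
    have hunf : matInfNorm C = ⨆ i, ∑ j, |C i j| := rfl
    rw [hα, hunf]
    exact le_ciSup (Set.Finite.bddAbove (Set.finite_range fun i => ∑ j, |C i j|)) τ
  have hα0 : 0 ≤ α := by
    rcases isEmpty_or_nonempty {x // x ∈ Tᶜ} with he | hne
    · rw [hα]
      simp only [matInfNorm]
      rw [Real.iSup_of_isEmpty]
    · obtain ⟨τ⟩ := hne
      exact le_trans (Finset.sum_nonneg fun _ _ => abs_nonneg _) (hrow τ)
  have hbound : ∀ τ, |C.mulVec hT τ| ≤ α * L1 := by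
    intro τ
    have h1 : |∑ t, C τ t * hT t| ≤ ∑ t, |C τ t| * |hT t| :=
      (Finset.abs_sum_le_sum_abs _ _).trans
        (le_of_eq (Finset.sum_congr rfl fun t _ => abs_mul _ _))
    have h2 : ∑ t, |C τ t| * |hT t| ≤ ∑ t, |C τ t| * L1 :=
      Finset.sum_le_sum fun t _ => mul_le_mul_of_nonneg_left
        (hL1sum ▸ Finset.single_le_sum (fun i (_ : i ∈ Finset.univ) => abs_nonneg (hT i))
          (Finset.mem_univ t)) (abs_nonneg _)
    calc |C.mulVec hT τ| = |∑ t, C τ t * hT t| := by simp [Matrix.mulVec, dotProduct]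
      _ ≤ ∑ t, |C τ t| * L1 := h1.trans h2
      _ = (∑ t, |C τ t|) * L1 := by rw [Finset.sum_mul]
      _ ≤ α * L1 := mul_le_mul_of_nonneg_right (hrow τ) hL1
  have hh' : ∑ τ, |hTc τ| ≤ L1 := hh
  have hE : |∑ τ, hTc τ * C.mulVec hT τ| ≤ α * L1 * L1 := by
    calc |∑ τ, hTc τ * C.mulVec hT τ| ≤ ∑ τ, |hTc τ * C.mulVec hT τ| :=
        Finset.abs_sum_le_sum_abs _ _
      _ = ∑ τ, |hTc τ| * |C.mulVec hT τ| :=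
        Finset.sum_congr rfl fun τ _ => abs_mul _ _
      _ ≤ ∑ τ, |hTc τ| * (α * L1) :=
        Finset.sum_le_sum fun τ _ => mul_le_mul_of_nonneg_left (hbound τ) (abs_nonneg _)
      _ = (∑ τ, |hTc τ|) * (α * L1) := by rw [Finset.sum_mul]
      _ ≤ L1 * (α * L1) := mul_le_mul_of_nonneg_right hh' (mul_nonneg hα0 hL1)
      _ = α * L1 * L1 := by ring
  have hs0 : (0:ℝ) < s := by exact_mod_cast hs1
  have hCS : L1 ^ 2 ≤ (s:ℝ) * ∑ t, hT t * hT t := by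
    have h1 := sq_sum_le_card_mul_sum_sq (s := (Finset.univ : Finset {x // x ∈ T}))
      (f := fun t => |hT t|)
    simp only [Finset.card_univ, Fintype.card_coe, hs, sq_abs] at h1
    calc L1 ^ 2 = (∑ t, |hT t|) ^ 2 := by rw [hL1sum]
      _ ≤ (s:ℝ) * ∑ t, hT t ^ 2 := h1
      _ = (s:ℝ) * ∑ t, hT t * hT t := by simp_rw [sq]
  have hP : 1/(s:ℝ) * L1 ^ 2 ≤ ∑ t, hT t * hT t := by
    rw [one_div, inv_mul_le_iff₀ hs0]
    exact hCS
  have habs : (∑ t, hT t * hT t) - |∑ τ, hTc τ * C.mulVec hT τ|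
      ≤ |(∑ t, hT t * hT t) + ∑ τ, hTc τ * C.mulVec hT τ| := by
    have h1 := neg_abs_le (∑ τ, hTc τ * C.mulVec hT τ)
    have h2 := le_abs_self ((∑ t, hT t * hT t) + ∑ τ, hTc τ * C.mulVec hT τ)
    linarith
  rw [key]
  calc (1/(s:ℝ) - α) * L1 ^ 2 = 1/(s:ℝ) * L1 ^ 2 - α * L1 * L1 := by ring
    _ ≤ (∑ t, hT t * hT t) - |∑ τ, hTc τ * C.mulVec hT τ| := sub_le_sub hP hE
    _ ≤ _ := habs
end
end
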